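/- arXiv:0910.4107 — 9 statements merged into one kernel-verified Lean document; each statement's English description precedes it below -/
import Mathlib

section
/- Let X be a nonempty separable metrizable space and n a natural number. Then dim X ≤ n if and only if there exist a nonempty zero-dimensional separable metrizable space Y and a closed continuous surjection f : Y → X such that every fiber f⁻¹(x) has at most n+1 points. -/
universe u

/-- The covering dimension of `X` is at most `n`: every finite open cover has an open
refinement in which every point belongs to at most `n + 1` members. -/
def CovDimLE (X : Type*) [TopologicalSpace X] (n : ℤ) : Prop :=
  ∀ 𝒰 : Set (Set X), 𝒰.Finite → (∀ U ∈ 𝒰, IsOpen U) → ⋃₀ 𝒰 = Set.univ →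
    ∃ 𝒱 : Set (Set X), 𝒱.Finite ∧ (∀ V ∈ 𝒱, IsOpen V) ∧ ⋃₀ 𝒱 = Set.univ ∧
      (∀ V ∈ 𝒱, ∃ U ∈ 𝒰, V ⊆ U) ∧
      ∀ x : X, ({V ∈ 𝒱 | x ∈ V}.ncard : ℤ) ≤ n + 1

/-- A space is zero-dimensional if it has a basis consisting of clopen sets. -/
def ZeroDimensional (X : Type*) [TopologicalSpace X] : Prop :=
  ∃ B : Set (Set X), TopologicalSpace.IsTopologicalBasis B ∧ ∀ U ∈ B, IsClopen U

/-!
`dim X ≤ n` from a map `f : Y → X`: pulling back a finite open cover to `Y` and refining it by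
a clopen partition indexed by the cover, the images of the pieces form a closed cover of `X`
whose order is bounded by the fiber size, and in a normal space a finite closed cover can be
swollen to an open one with the same nerve.

Conversely, for `dim X ≤ n` one builds finite open covers `L k` of order `≤ n`, each member of
`L (k + 1)` having its closure inside a chosen parent in `L k` and lying on one side of the
`k`-th pair `C k ⊆ B k` of a countable separating family. `Y` is the space of threads: pairs of
a branch `σ` of the tree of parents and a point `x` lying in every `σ k`. The projection to `X`
is closed because the tree is compact, and since threads over the same point that differ at some
level differ at all later levels, the fiber over `x` injects into `{V ∈ L k | x ∈ V}` for large
`k`.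
-/

open Set Filter Topology TopologicalSpace Function

section Swelling

variable {X ι : Type*} [TopologicalSpace X] [NormalSpace X] [Finite ι]

theorem exists_swelling_update [DecidableEq ι] {K : ι → Set X} (hK : ∀ i, IsClosed (K i))
    {j : ι} {u : Set X} (hu : IsOpen u) (hKu : K j ⊆ u) :
    ∃ W, IsOpen W ∧ K j ⊆ W ∧ closure W ⊆ u ∧
      ∀ x, ∃ z, ∀ i, x ∈ update K j (closure W) i → z ∈ K i := by
  -- keeping `closure W` off `Z` makes every intersection of the `K i` that meets it meet `K j`
  set Z := ⋃ s ∈ {s : Set ι | Disjoint (K j) (⋂ i ∈ s, K i)}, ⋂ i ∈ s, K i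
  have hZ : IsClosed Z :=
    (toFinite _).isClosed_biUnion fun s _ => isClosed_biInter fun i _ => hK i
  have hKZ : K j ⊆ u ∩ Zᶜ := fun x hx => ⟨hKu hx, fun hxZ => by
    obtain ⟨s, hs, hxs⟩ := mem_iUnion₂.1 hxZ
    exact disjoint_left.1 hs hx hxs⟩
  obtain ⟨W, hWo, hKW, hWu⟩ :=
    normal_exists_closure_subset (hK j) (hu.inter hZ.isOpen_compl) hKZ
  refine ⟨W, hWo, hKW, hWu.trans inter_subset_left, fun x => ?_⟩
  by_cases hx : x ∈ closure W
  · have hmeet : ¬Disjoint (K j) (⋂ i ∈ {i | x ∈ K i}, K i) := fun hd =>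
      (hWu hx).2 (mem_biUnion hd (mem_iInter₂.2 fun i hi => hi))
    obtain ⟨z, hzj, hz⟩ := not_disjoint_iff_nonempty_inter.1 hmeet
    refine ⟨z, fun i hi => ?_⟩
    rcases eq_or_ne i j with rfl | hij
    · exact hzj
    · exact mem_iInter₂.1 hz i (by simpa [hij] using hi)
  · refine ⟨x, fun i hi => ?_⟩
    rcases eq_or_ne i j with rfl | hij
    · exact absurd (by simpa using hi) hx
    · simpa [hij] using hi

/-- Swelling lemma: the open sets `interior (K i)` cover what the `F i` cover, with no larger
nerve. -/
theorem exists_closed_swelling {F u : ι → Set X} (hF : ∀ i, IsClosed (F i))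
    (hu : ∀ i, IsOpen (u i)) (hFu : ∀ i, F i ⊆ u i) :
    ∃ K : ι → Set X, (∀ i, IsClosed (K i)) ∧ (∀ i, F i ⊆ interior (K i)) ∧
      (∀ i, K i ⊆ u i) ∧ ∀ x, ∃ z, ∀ i, x ∈ K i → z ∈ F i := by
  classical
  have := Fintype.ofFinite ι
  suffices h : ∀ t : Finset ι, ∃ K : ι → Set X, (∀ i, IsClosed (K i)) ∧ (∀ i, F i ⊆ K i) ∧
      (∀ i ∈ t, F i ⊆ interior (K i)) ∧ (∀ i, K i ⊆ u i) ∧ ∀ x, ∃ z, ∀ i, x ∈ K i → z ∈ F i by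
    obtain ⟨K, hK, -, hFK, hKu, hKF⟩ := h Finset.univ
    exact ⟨K, hK, fun i => hFK i (Finset.mem_univ i), hKu, hKF⟩
  intro t
  induction t using Finset.induction_on with
  | empty => exact ⟨F, hF, fun _ => subset_rfl, by simp, hFu, fun x => ⟨x, fun _ h => h⟩⟩
  | insert j t _ ih =>
    obtain ⟨K, hK, hFK, hFKt, hKu, hKF⟩ := ih
    obtain ⟨W, hWo, hKW, hWu, hWK⟩ := exists_swelling_update hK (hu j) (hKu j)
    have hFW : F j ⊆ interior (closure W) :=
      (hFK j).trans (hKW.trans (interior_maximal subset_closure hWo))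
    refine ⟨update K j (closure W), (forall_update_iff K fun _ s => IsClosed s).2
        ⟨isClosed_closure, fun i _ => hK i⟩,
      (forall_update_iff K fun i s => F i ⊆ s).2 ⟨hFW.trans interior_subset, fun i _ => hFK i⟩,
      fun i hi => ?_, (forall_update_iff K fun i s => s ⊆ u i).2 ⟨hWu, fun i _ => hKu i⟩,
      fun x => ?_⟩
    · rcases eq_or_ne i j with rfl | hij
      · simpa using hFW
      · simpa [hij] using hFKt i (by simpa [hij] using hi)
    · obtain ⟨y, hy⟩ := hWK x
      obtain ⟨z, hz⟩ := hKF y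
      exact ⟨z, fun i hi => hz i (hy i hi)⟩

end Swelling

theorem ZeroDimensional.exists_isLocallyConstant_mem {Y ι : Type*} [TopologicalSpace Y]
    [SecondCountableTopology Y] (hY : ZeroDimensional Y) {G : ι → Set Y}
    (hG : ∀ i, IsOpen (G i)) (hcov : ⋃ i, G i = univ) :
    ∃ r : Y → ι, IsLocallyConstant r ∧ ∀ y, y ∈ G (r y) := by
  obtain ⟨B, hB, hBc⟩ := hY
  have hsmall : ∀ y, ∃ c ∈ B, y ∈ c ∧ ∃ i, c ⊆ G i := fun y => by
    obtain ⟨i, hi⟩ := mem_iUnion.1 (hcov ▸ mem_univ y)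
    obtain ⟨c, hc, hyc, hcG⟩ := hB.exists_subset_of_mem_open hi (hG i)
    exact ⟨c, hc, hyc, i, hcG⟩
  choose c hcB hyc i hci using hsmall
  have hcc : ∀ y, IsClopen (c y) := fun y => hBc _ (hcB y)
  rcases isEmpty_or_nonempty Y with hempty | ⟨⟨y₀⟩⟩
  · exact ⟨isEmptyElim, .of_constant _ isEmptyElim, isEmptyElim⟩
  obtain ⟨T, hTc, hT⟩ := isOpen_iUnion_countable c fun y => (hcc y).isOpen
  have hTcov : ∀ y, ∃ t ∈ T, y ∈ c t := fun y => by
    simpa [← hT] using mem_iUnion.2 ⟨y, hyc y⟩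
  obtain ⟨e, rfl⟩ := hTc.exists_eq_range (let ⟨t, ht, _⟩ := hTcov y₀; ⟨t, ht⟩)
  have hex : ∀ y, ∃ m, y ∈ c (e m) := fun y => by simpa using hTcov y
  classical
  let idx : Y → ℕ := fun y => Nat.find (hex y)
  have hidx : IsLocallyConstant idx := by
    refine IsLocallyConstant.iff_isOpen_fiber.2 fun m => ?_
    have : idx ⁻¹' {m} = c (e m) ∩ ⋂ j ∈ Iio m, (c (e j))ᶜ := by
      ext y
      simp [idx, Nat.find_eq_iff]
    rw [this]
    exact (hcc _).isOpen.inter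
      ((finite_Iio m).isOpen_biInter fun j _ => (hcc _).isClosed.isOpen_compl)
  exact ⟨fun y => i (e (idx y)), hidx.comp fun m => i (e m), fun y => hci _ (Nat.find_spec (hex y))⟩

theorem covDimLE_of_isClosedMap {X Y : Type*} [TopologicalSpace X] [NormalSpace X]
    [TopologicalSpace Y] [SecondCountableTopology Y] (hY : ZeroDimensional Y) {f : Y → X}
    (hf : Continuous f) (hfc : IsClosedMap f) (hfs : Surjective f) {n : ℕ}
    (hfib : ∀ x, (f ⁻¹' {x}).encard ≤ n + 1) : CovDimLE X n := by
  intro 𝒰 h𝒰fin h𝒰open h𝒰cov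
  have : Finite 𝒰 := h𝒰fin.to_subtype
  obtain ⟨r, hr, hrf⟩ := hY.exists_isLocallyConstant_mem (G := fun U : 𝒰 => f ⁻¹' U)
    (fun U => (h𝒰open U U.2).preimage hf)
    (by rw [← preimage_iUnion, ← sUnion_eq_iUnion, h𝒰cov, preimage_univ])
  set F : 𝒰 → Set X := fun U => f '' (r ⁻¹' {U})
  have hFr : ∀ z, {U | z ∈ F U} = r '' (f ⁻¹' {z}) := fun z => by
    ext U
    simp [F, and_comm]
  obtain ⟨K, -, hFK, hKU, hKF⟩ := exists_closed_swelling (F := F) (u := fun U => U.1)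
    (fun U => hfc _ (hr.isClosed_fiber U)) (fun U => h𝒰open U U.2)
    (fun U => image_subset_iff.2 fun y hy => (hy : r y = U) ▸ hrf y)
  refine ⟨range fun U => interior (K U), finite_range _,
    forall_mem_range.2 fun _ => isOpen_interior, eq_univ_of_forall fun x => ?_,
    forall_mem_range.2 fun U => ⟨U, U.2, interior_subset.trans (hKU U)⟩, fun x => ?_⟩
  · obtain ⟨y, rfl⟩ := hfs x
    exact mem_sUnion_of_mem (hFK (r y) ⟨y, rfl, rfl⟩) (mem_range_self _)
  · obtain ⟨z, hz⟩ := hKF x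
    have hle : {V ∈ range fun U => interior (K U) | x ∈ V}.encard ≤ (n + 1 : ℕ) := calc
      _ ≤ ((fun U => interior (K U)) '' {U | x ∈ interior (K U)}).encard := by
        refine encard_le_encard ?_
        rintro _ ⟨⟨U, rfl⟩, hxU⟩
        exact ⟨U, hxU, rfl⟩
      _ ≤ {U | x ∈ interior (K U)}.encard := encard_image_le _ _
      _ ≤ {U | z ∈ F U}.encard := encard_le_encard fun U hU => hz U (interior_subset hU)
      _ ≤ (f ⁻¹' {z}).encard := hFr z ▸ encard_image_le _ _
      _ ≤ (n + 1 : ℕ) := by exact_mod_cast hfib z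
    exact_mod_cast (encard_le_coe_iff_finite_ncard_le.1 hle).2

def IsFiniteOpenCoverOfOrderLE {X : Type*} [TopologicalSpace X] (n : ℕ) (𝒱 : Set (Set X)) :
    Prop :=
  𝒱.Finite ∧ (∀ V ∈ 𝒱, IsOpen V) ∧ ⋃₀ 𝒱 = univ ∧ ∀ x, {V ∈ 𝒱 | x ∈ V}.encard ≤ n + 1

theorem isFiniteOpenCoverOfOrderLE_univ {X : Type*} [TopologicalSpace X] (n : ℕ) :
    IsFiniteOpenCoverOfOrderLE n {(univ : Set X)} := by
  refine ⟨finite_singleton _, by simp, sUnion_singleton _, fun x => ?_⟩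
  calc {V ∈ {(univ : Set X)} | x ∈ V}.encard ≤ ({univ} : Set (Set X)).encard :=
        encard_le_encard (sep_subset _ _)
    _ ≤ n + 1 := by simp

theorem CovDimLE.exists_refinement_separating {X : Type*} [TopologicalSpace X] [NormalSpace X]
    {n : ℕ} (hdim : CovDimLE X n) {𝒞 : Set (Set X)} (h𝒞fin : 𝒞.Finite)
    (h𝒞open : ∀ U ∈ 𝒞, IsOpen U) (h𝒞cov : ⋃₀ 𝒞 = univ) {C B : Set X} (hC : IsClosed C)
    (hB : IsOpen B) (hCB : C ⊆ B) :
    ∃ 𝒟, IsFiniteOpenCoverOfOrderLE n 𝒟 ∧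
      ∀ V ∈ 𝒟, (∃ U ∈ 𝒞, closure V ⊆ U) ∧ (V ⊆ B ∨ V ⊆ Cᶜ) := by
  have : Finite 𝒞 := h𝒞fin.to_subtype
  obtain ⟨v, hvcov, hvopen, hvcl⟩ := exists_subset_iUnion_closure_subset isClosed_univ
    (fun U : 𝒞 => h𝒞open U U.2) (fun x _ => toFinite _)
    (by rw [← sUnion_eq_iUnion, h𝒞cov])
  set 𝒲 := range (fun U => v U ∩ B) ∪ range (fun U => v U ∩ Cᶜ)
  have h𝒲cov : ⋃₀ 𝒲 = univ := eq_univ_of_forall fun x => by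
    obtain ⟨U, hU⟩ := mem_iUnion.1 (hvcov (mem_univ x))
    by_cases hxB : x ∈ B
    · exact ⟨_, Or.inl ⟨U, rfl⟩, hU, hxB⟩
    · exact ⟨_, Or.inr ⟨U, rfl⟩, hU, fun hxC => hxB (hCB hxC)⟩
  obtain ⟨𝒟, h𝒟fin, h𝒟open, h𝒟cov, h𝒟𝒲, h𝒟ord⟩ := hdim 𝒲 ((finite_range _).union (finite_range _))
    (by rintro W (⟨U, rfl⟩ | ⟨U, rfl⟩)
        exacts [(hvopen U).inter hB, (hvopen U).inter hC.isOpen_compl])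
    h𝒲cov
  refine ⟨𝒟, ⟨h𝒟fin, h𝒟open, h𝒟cov, fun x => ?_⟩, fun V hV => ?_⟩
  · have : {V ∈ 𝒟 | x ∈ V}.ncard ≤ n + 1 := by exact_mod_cast h𝒟ord x
    rw [← (h𝒟fin.subset (sep_subset _ _)).cast_ncard_eq]
    exact_mod_cast this
  · obtain ⟨W, hW, hVW⟩ := h𝒟𝒲 V hV
    rcases hW with ⟨U, rfl⟩ | ⟨U, rfl⟩
    · exact ⟨⟨U, U.2, (closure_mono (hVW.trans inter_subset_left)).trans (hvcl U)⟩,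
        .inl (hVW.trans inter_subset_right)⟩
    · exact ⟨⟨U, U.2, (closure_mono (hVW.trans inter_subset_left)).trans (hvcl U)⟩,
        .inr (hVW.trans inter_subset_right)⟩

theorem exists_seq_closed_subset_open {X : Type*} [TopologicalSpace X] [RegularSpace X]
    [SecondCountableTopology X] :
    ∃ C B : ℕ → Set X, (∀ k, IsClosed (C k)) ∧ (∀ k, IsOpen (B k)) ∧ (∀ k, C k ⊆ B k) ∧
      ∀ x O, IsOpen O → x ∈ O → ∃ k, x ∈ C k ∧ B k ⊆ O := by
  set 𝔅 := countableBasis X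
  have h𝔅 : IsTopologicalBasis 𝔅 := isBasis_countableBasis X
  -- `(∅, ∅)` only makes the family nonempty
  set P : Set (Set X × Set X) := insert (∅, ∅) {p | p ∈ 𝔅 ×ˢ 𝔅 ∧ closure p.1 ⊆ p.2}
  have hP : ∀ p ∈ P, IsOpen p.2 ∧ closure p.1 ⊆ p.2 := by
    rintro p (rfl | ⟨⟨-, hp⟩, hcl⟩)
    · simp
    · exact ⟨h𝔅.isOpen hp, hcl⟩
  have hPc : P.Countable := (((countable_countableBasis X).prod
    (countable_countableBasis X)).mono fun _ hp => hp.1).insert _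
  obtain ⟨e, he⟩ := hPc.exists_eq_range (insert_nonempty _ _)
  have heP : ∀ k, e k ∈ P := fun k => he ▸ mem_range_self k
  refine ⟨fun k => closure (e k).1, fun k => (e k).2, fun k => isClosed_closure,
    fun k => (hP _ (heP k)).1, fun k => (hP _ (heP k)).2, fun x O hO hxO => ?_⟩
  obtain ⟨b₂, hb₂, hxb₂, hb₂O⟩ := h𝔅.exists_subset_of_mem_open hxO hO
  obtain ⟨b₁, hb₁, hxb₁, hb₁b₂⟩ := h𝔅.exists_closure_subset ((h𝔅.isOpen hb₂).mem_nhds hxb₂)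
  have hb : (b₁, b₂) ∈ P := .inr ⟨⟨hb₁, hb₂⟩, hb₁b₂⟩
  obtain ⟨k, hk⟩ : (b₁, b₂) ∈ range e := he ▸ hb
  exact ⟨k, by simpa [hk] using subset_closure hxb₁, by simpa [hk] using hb₂O⟩

theorem exists_seq_of_forall_exists_succ {α : Type*} {P : α → Prop} (R : ℕ → α → α → Prop)
    {a : α} (ha : P a) (h : ∀ k x, P x → ∃ y, P y ∧ R k x y) :
    ∃ s : ℕ → α, (∀ k, P (s k)) ∧ ∀ k, R k (s k) (s (k + 1)) := by
  choose g hgP hgR using h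
  let s : ℕ → {x // P x} := fun k =>
    Nat.rec (motive := fun _ => {x // P x}) ⟨a, ha⟩ (fun k x => ⟨g k x x.2, hgP k x x.2⟩) k
  exact ⟨fun k => s k, fun k => (s k).2, fun k => hgR k (s k) (s k).2⟩

theorem CovDimLE.exists_nested_covers {X : Type*} [TopologicalSpace X] [RegularSpace X]
    [SecondCountableTopology X] {n : ℕ} (hdim : CovDimLE X n) :
    ∃ (L : ℕ → Set (Set X)) (par : ∀ k, L (k + 1) → L k), (∀ k, (L k).Finite) ∧
      (∀ k, ∀ V : L (k + 1), closure (V : Set X) ⊆ par k V) ∧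
      (∀ k x, ∃ V : L k, x ∈ (V : Set X)) ∧
      (∀ x O, IsOpen O → x ∈ O → ∃ k, ∀ V : L k, x ∈ (V : Set X) → (V : Set X) ⊆ O) ∧
      ∀ k x, {V : L k | x ∈ (V : Set X)}.encard ≤ n + 1 := by
  obtain ⟨C, B, hC, hB, hCB, hsep⟩ := exists_seq_closed_subset_open (X := X)
  obtain ⟨L, hL, hLL⟩ := exists_seq_of_forall_exists_succ
    (fun k 𝒞 𝒟 => ∀ V ∈ 𝒟, (∃ U ∈ 𝒞, closure V ⊆ U) ∧ (V ⊆ B k ∨ V ⊆ (C k)ᶜ))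
    (isFiniteOpenCoverOfOrderLE_univ n) fun k 𝒞 h𝒞 =>
      hdim.exists_refinement_separating h𝒞.1 h𝒞.2.1 h𝒞.2.2.1 (hC k) (hB k) (hCB k)
  choose par hpar using fun k (V : L (k + 1)) =>
    let ⟨U, hU, hVU⟩ := (hLL k V V.2).1; (⟨⟨U, hU⟩, hVU⟩ : ∃ U : L k, closure (V : Set X) ⊆ U)
  refine ⟨L, par, fun k => (hL k).1, hpar, fun k x => ?_, fun x O hO hxO => ?_, fun k x => ?_⟩
  · obtain ⟨V, hV, hxV⟩ := mem_sUnion.1 ((hL k).2.2.1 ▸ mem_univ x)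
    exact ⟨⟨V, hV⟩, hxV⟩
  · obtain ⟨k, hxC, hBO⟩ := hsep x O hO hxO
    refine ⟨k + 1, fun V hxV => ?_⟩
    rcases (hLL k V V.2).2 with hVB | hVC
    · exact hVB.trans hBO
    · exact absurd hxC (hVC hxV)
  · have hval : Subtype.val '' {V : L k | x ∈ (V : Set X)} = {V ∈ L k | x ∈ V} := by
      ext V
      simp [and_comm]
    rw [← Subtype.val_injective.encard_image, hval]
    exact (hL k).2.2.2 x

theorem Topology.IsInducing.zeroDimensional {Y Z : Type*} [TopologicalSpace Y]
    [TopologicalSpace Z] {g : Y → Z} (hg : IsInducing g) (hZ : ZeroDimensional Z) :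
    ZeroDimensional Y :=
  let ⟨B, hB, hBc⟩ := hZ
  ⟨preimage g '' B, hB.isInducing hg,
    forall_mem_image.2 fun U hU => (hBc U hU).preimage hg.continuous⟩

theorem zeroDimensional_pi_discrete {E : ℕ → Type*} [∀ k, TopologicalSpace (E k)]
    [∀ k, DiscreteTopology (E k)] : ZeroDimensional (∀ k, E k) := by
  refine ⟨_, PiNat.isTopologicalBasis_cylinders E, ?_⟩
  rintro _ ⟨x, m, rfl⟩
  refine ⟨?_, PiNat.isOpen_cylinder _ x m⟩
  rw [PiNat.cylinder_eq_pi]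
  exact isClosed_set_pi fun _ _ => isClosed_discrete _

section Branches

variable {A : ℕ → Type*} (par : ∀ k, A (k + 1) → A k)

theorem eq_of_branch_eq {σ τ : ∀ k, A k} (hσ : ∀ k, par k (σ (k + 1)) = σ k)
    (hτ : ∀ k, par k (τ (k + 1)) = τ k) {j k : ℕ} (hjk : j ≤ k) (h : σ k = τ k) : σ j = τ j := by
  induction k, hjk using Nat.le_induction with
  | base => exact h
  | succ k _ ih => exact ih (by rw [← hσ, ← hτ, h])

theorem exists_branch_through [∀ k, Nonempty (A k)] (m : ℕ) (a : A m) :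
    ∃ σ : ∀ k, A k, σ m = a ∧ ∀ k < m, par k (σ (k + 1)) = σ k := by
  induction m with
  | zero => exact ⟨update (fun _ => Classical.arbitrary _) 0 a, by simp, by simp⟩
  | succ m ih =>
    obtain ⟨σ, hσm, hσ⟩ := ih (par m a)
    refine ⟨update σ (m + 1) a, by simp, fun k hk => ?_⟩
    rcases (Nat.lt_succ_iff.1 hk).eq_or_lt with rfl | hk
    · simp [hσm]
    · rw [update_of_ne (by omega), update_of_ne (by omega), hσ k hk]

end Branches

section Threads

variable {X : Type*} {A : ℕ → Type*}

def threadSpace (cell : ∀ k, A k → Set X) (par : ∀ k, A (k + 1) → A k) :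
    Set ((∀ k, A k) × X) :=
  {p | ∀ k, par k (p.1 (k + 1)) = p.1 k ∧ p.2 ∈ cell k (p.1 k)}

variable (cell : ∀ k, A k → Set X) (par : ∀ k, A (k + 1) → A k)

theorem encard_fiber_threadSpace_le {n : ℕ}
    (horder : ∀ k x, {a | x ∈ cell k a}.encard ≤ n + 1) (x : X) :
    ((fun p : threadSpace cell par => p.1.2) ⁻¹' {x}).encard ≤ n + 1 := by
  set S := (fun p : threadSpace cell par => p.1.2) ⁻¹' {x}
  by_contra! hlt
  obtain ⟨T, hTS, hT⟩ := exists_subset_encard_eq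
    ((ENat.add_one_le_iff (by simp)).2 hlt : (n + 1 : ℕ∞) + 1 ≤ S.encard)
  have hTfin : T.Finite := finite_of_encard_eq_coe (k := n + 2) (by rw [hT]; rfl)
  -- distinct threads over `x` disagree at some level, hence at every later level
  have hinj : ∀ᶠ k in atTop, InjOn (fun p : threadSpace cell par => p.1.1 k) T := by
    have hpairs : ∀ pq ∈ T ×ˢ T, ∀ᶠ k in atTop,
        (pq.1 : threadSpace cell par).1.1 k = pq.2.1.1 k → pq.1 = pq.2 := by
      rintro ⟨p, q⟩ ⟨hp, hq⟩
      by_cases hpq : p = q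
      · exact .of_forall fun _ _ => hpq
      have hne : p.1.1 ≠ q.1.1 := fun h => hpq (Subtype.ext (Prod.ext h
        ((hTS hp : p.1.2 = x).trans (hTS hq : q.1.2 = x).symm)))
      obtain ⟨j, hj⟩ := Function.ne_iff.1 hne
      filter_upwards [eventually_ge_atTop j] with k hjk hk
      exact absurd (eq_of_branch_eq par (fun i => (p.2 i).1) (fun i => (q.2 i).1) hjk hk) hj
    filter_upwards [(hTfin.prod hTfin).eventually_all.2 hpairs] with k hk p hp q hq hpq
    exact hk (p, q) ⟨hp, hq⟩ hpq
  obtain ⟨k, hk⟩ := hinj.exists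
  have : (n + 1 : ℕ∞) + 1 ≤ n + 1 := calc
    _ = T.encard := hT.symm
    _ = ((fun p : threadSpace cell par => p.1.1 k) '' T).encard := hk.encard_image.symm
    _ ≤ {a | x ∈ cell k a}.encard := encard_le_encard <| by
      rintro _ ⟨p, hp, rfl⟩
      exact (hTS hp : p.1.2 = x) ▸ (p.2 k).2
    _ ≤ n + 1 := horder k x
  exact absurd this (by simp [ENat.add_one_le_iff])

variable [∀ k, TopologicalSpace (A k)] [∀ k, DiscreteTopology (A k)]

theorem exists_mem_threadSpace [∀ k, Finite (A k)]
    (hsub : ∀ k a, cell (k + 1) a ⊆ cell k (par k a)) (hcov : ∀ k x, ∃ a, x ∈ cell k a)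
    (x : X) : ∃ σ, (σ, x) ∈ threadSpace cell par := by
  have : ∀ k, Nonempty (A k) := fun k => let ⟨a, _⟩ := hcov k x; ⟨a⟩
  -- König's lemma, by compactness of `∀ k, A k`
  set T : ℕ → Set (∀ k, A k) := fun m =>
    {σ | x ∈ cell m (σ m)} ∩ ⋂ k ∈ Iio m, {σ | par k (σ (k + 1)) = σ k}
  have hTcl : ∀ m, IsClosed (T m) := fun m => by
    refine .inter ?_ (isClosed_biInter fun k _ => ?_)
    · exact (isClosed_discrete {a | x ∈ cell m a}).preimage (continuous_apply m)
    · exact isClosed_eq (continuous_of_discreteTopology.comp (continuous_apply (k + 1)))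
        (continuous_apply k)
  have hTdec : ∀ m, T (m + 1) ⊆ T m := by
    rintro m σ ⟨hx, hσ⟩
    simp only [mem_iInter₂, mem_Iio, mem_ofPred_eq] at hσ
    refine ⟨?_, mem_iInter₂.2 fun k hk => hσ k (Nat.lt_succ_of_lt hk)⟩
    simpa [← hσ m m.lt_succ_self] using hsub m _ hx
  have hTne : ∀ m, (T m).Nonempty := fun m => by
    obtain ⟨a, ha⟩ := hcov m x
    obtain ⟨σ, hσm, hσ⟩ := exists_branch_through par m a
    exact ⟨σ, by simpa [hσm] using ha, mem_iInter₂.2 hσ⟩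
  obtain ⟨σ, hσ⟩ := IsCompact.nonempty_iInter_of_sequence_nonempty_isCompact_isClosed T hTdec hTne
    (hTcl 0).isCompact hTcl
  simp only [mem_iInter] at hσ
  exact ⟨σ, fun k => ⟨mem_iInter₂.1 (hσ (k + 1)).2 k k.lt_succ_self, (hσ k).1⟩⟩

variable [TopologicalSpace X]

theorem isClosed_threadSpace [∀ k, Finite (A k)]
    (hpar : ∀ k a, closure (cell (k + 1) a) ⊆ cell k (par k a)) :
    IsClosed (threadSpace cell par) := by
  have hclosure : threadSpace cell par =
      ⋂ k, {p | par k (p.1 (k + 1)) = p.1 k} ∩ {p | p.2 ∈ closure (cell k (p.1 k))} := by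
    refine Subset.antisymm (fun p hp => mem_iInter.2 fun k => ⟨(hp k).1, subset_closure (hp k).2⟩)
      fun p hp => fun k => ⟨(mem_iInter.1 hp k).1, ?_⟩
    rw [← (mem_iInter.1 hp k).1]
    exact hpar k _ (mem_iInter.1 hp (k + 1)).2
  have hcell : ∀ k, {p : (∀ k, A k) × X | p.2 ∈ closure (cell k (p.1 k))} =
      ⋃ a, (fun p : (∀ k, A k) × X => p.1 k) ⁻¹' {a} ∩ Prod.snd ⁻¹' closure (cell k a) :=
      fun k => by
    ext p
    simp
  rw [hclosure]
  refine isClosed_iInter fun k => .inter (isClosed_eq (by fun_prop) (by fun_prop)) ?_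
  rw [hcell]
  exact isClosed_iUnion_of_finite fun a =>
    ((isClosed_discrete _).preimage (by fun_prop)).inter (isClosed_closure.preimage continuous_snd)

theorem isClosedMap_snd_threadSpace [∀ k, Finite (A k)]
    (hpar : ∀ k a, closure (cell (k + 1) a) ⊆ cell k (par k a)) :
    IsClosedMap fun p : threadSpace cell par => p.1.2 :=
  isClosedMap_snd_of_compactSpace.comp
    (isClosed_threadSpace cell par hpar).isClosedEmbedding_subtypeVal.isClosedMap

theorem isInducing_fst_threadSpace
    (hfine : ∀ x O, IsOpen O → x ∈ O → ∃ k, ∀ a, x ∈ cell k a → cell k a ⊆ O) :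
    IsInducing fun p : threadSpace cell par => p.1.1 := by
  refine isInducing_iff_nhds.2 fun p => ?_
  have hsnd : Tendsto (fun q : threadSpace cell par => q.1.2)
      (comap (fun q : threadSpace cell par => q.1.1) (𝓝 p.1.1)) (𝓝 p.1.2) := by
    refine (nhds_basis_opens _).tendsto_right_iff.2 fun O ⟨hxO, hO⟩ => ?_
    obtain ⟨k, hk⟩ := hfine _ O hO hxO
    have hnhds : {σ : ∀ k, A k | σ k = p.1.1 k} ∈ 𝓝 p.1.1 :=
      ((isOpen_discrete {p.1.1 k}).preimage (continuous_apply k)).mem_nhds rfl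
    filter_upwards [preimage_mem_comap hnhds] with q hq
    exact hk _ (p.2 k).2 ((hq : q.1.1 k = p.1.1 k) ▸ (q.2 k).2)
  rw [nhds_subtype, nhds_prod_eq, comap_prod]
  exact inf_eq_left.2 (tendsto_iff_comap.1 hsnd)

end Threads

theorem exists_zeroDimensional_closedMap_of_cells {X : Type u} [TopologicalSpace X]
    [MetrizableSpace X] [SecondCountableTopology X] [Nonempty X] {A : ℕ → Type u}
    [∀ k, Finite (A k)] {n : ℕ} (cell : ∀ k, A k → Set X) (par : ∀ k, A (k + 1) → A k)
    (hpar : ∀ k a, closure (cell (k + 1) a) ⊆ cell k (par k a))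
    (hcov : ∀ k x, ∃ a, x ∈ cell k a)
    (hfine : ∀ x O, IsOpen O → x ∈ O → ∃ k, ∀ a, x ∈ cell k a → cell k a ⊆ O)
    (horder : ∀ k x, {a | x ∈ cell k a}.encard ≤ n + 1) :
    ∃ (Y : Type u) (_ : TopologicalSpace Y), Nonempty Y ∧ SeparableSpace Y ∧
      MetrizableSpace Y ∧ ZeroDimensional Y ∧
      ∃ f : Y → X, Continuous f ∧ IsClosedMap f ∧ Surjective f ∧
        ∀ x : X, (f ⁻¹' {x}).encard ≤ n + 1 := by
  let _ : ∀ k, TopologicalSpace (A k) := fun _ => ⊥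
  have : ∀ k, DiscreteTopology (A k) := fun _ => ⟨rfl⟩
  have hsurj : Surjective fun p : threadSpace cell par => p.1.2 := fun x =>
    let ⟨σ, hσ⟩ := exists_mem_threadSpace cell par (fun k a => subset_closure.trans (hpar k a))
      hcov x
    ⟨⟨(σ, x), hσ⟩, rfl⟩
  exact ⟨threadSpace cell par, inferInstance, hsurj.nonempty, inferInstance, inferInstance,
    (isInducing_fst_threadSpace cell par hfine).zeroDimensional zeroDimensional_pi_discrete,
    _, by fun_prop, isClosedMap_snd_threadSpace cell par hpar, hsurj,
    encard_fiber_threadSpace_le cell par horder⟩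

theorem secondCountableTopology_of_separable_of_metrizable (X : Type*) [TopologicalSpace X]
    [SeparableSpace X] [MetrizableSpace X] : SecondCountableTopology X :=
  let _ := metrizableSpaceMetric X
  UniformSpace.secondCountable_of_separable X

/-- Hurewicz' theorem: a nonempty separable metrizable space `X` has covering dimension at
most `n` iff it is the image of a nonempty zero-dimensional separable metrizable space under
a closed continuous surjection with fibers of at most `n + 1` points. -/
theorem statement0 {X : Type u} [TopologicalSpace X] [Nonempty X]
    [TopologicalSpace.SeparableSpace X] [TopologicalSpace.MetrizableSpace X] (n : ℕ) :
    CovDimLE X n ↔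
      ∃ (Y : Type u) (_ : TopologicalSpace Y), Nonempty Y ∧
        TopologicalSpace.SeparableSpace Y ∧ TopologicalSpace.MetrizableSpace Y ∧
        ZeroDimensional Y ∧
        ∃ f : Y → X, Continuous f ∧ IsClosedMap f ∧ Function.Surjective f ∧
          ∀ x : X, (f ⁻¹' {x}).encard ≤ n + 1 := by
  have := secondCountableTopology_of_separable_of_metrizable X
  refine ⟨fun hdim => ?_, fun ⟨Y, _, _, _, _, hY, f, hf, hfc, hfs, hfib⟩ => ?_⟩
  · obtain ⟨L, par, hfin, hpar, hcov, hfine, horder⟩ := hdim.exists_nested_covers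
    have := fun k => (hfin k).to_subtype
    exact exists_zeroDimensional_closedMap_of_cells (fun k (V : L k) => (V : Set X)) par hpar
      hcov hfine horder
  · have := secondCountableTopology_of_separable_of_metrizable Y
    exact covDimLE_of_isClosedMap hY hf hfc hfs hfib
end

section
/- Let f : Y → X be a continuous surjection between compact Hausdorff spaces, let n be a natural number, suppose Y is zero-dimensional, and suppose every fiber f⁻¹(x) has at most n+1 points. Then dim X ≤ n. -/
open Set TopologicalSpace

/-- Swelling lemma: in a normal space, a finite family of closed sets `F i ⊆ W i`
can be enlarged to open sets `G i` (for `i` in a given finset) preserving empty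
intersection patterns. -/
lemma swell {X : Type*} {ι : Type*} [TopologicalSpace X] [NormalSpace X] [Fintype ι]
    [DecidableEq ι] (W : ι → Set X) (hW : ∀ i, IsOpen (W i)) (T : Finset ι) :
    ∀ F : ι → Set X, (∀ i, IsClosed (F i)) → (∀ i, F i ⊆ W i) →
    ∃ G : ι → Set X, (∀ i, F i ⊆ G i) ∧ (∀ i, G i ⊆ W i) ∧ (∀ i ∈ T, IsOpen (G i)) ∧
      (∀ i ∉ T, G i = F i) ∧
      ∀ S : Finset ι, (⋂ i ∈ S, F i) = ∅ → (⋂ i ∈ S, G i) = ∅ := by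
  induction T using Finset.induction_on with
  | empty =>
    intro F hFc hFW
    exact ⟨F, fun i => subset_rfl, hFW, by simp, fun i _ => rfl, fun S h => h⟩
  | @insert j T hj ih =>
    intro F hFc hFW
    set B : Set X := ⋃ S ∈ {S : Finset ι | (⋂ i ∈ S, F i) ∩ F j = ∅}, ⋂ i ∈ S, F i with hB
    have hBc : IsClosed B :=
      (Set.toFinite _).isClosed_biUnion fun S _ => isClosed_biInter fun i _ => hFc i
    have hFjB : F j ⊆ W j ∩ Bᶜ := by
      intro x hx
      refine ⟨hFW j hx, fun hxB => ?_⟩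
      obtain ⟨S, hS, hxS⟩ := Set.mem_iUnion₂.mp hxB
      exact absurd (Set.mem_inter hxS hx) (by rw [hS]; exact id)
    obtain ⟨U, hUo, hFjU, hclU⟩ :=
      normal_exists_closure_subset (hFc j) ((hW j).inter hBc.isOpen_compl) hFjB
    set F' : ι → Set X := Function.update F j (closure U) with hF'
    have hF'j : F' j = closure U := Function.update_self j (closure U) F
    have hF'ne : ∀ i, i ≠ j → F' i = F i := fun i hij => Function.update_of_ne hij _ F
    have hF'c : ∀ i, IsClosed (F' i) := by
      intro i
      rcases eq_or_ne i j with rfl | hij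
      · rw [hF'j]; exact isClosed_closure
      · rw [hF'ne i hij]; exact hFc i
    have hF'W : ∀ i, F' i ⊆ W i := by
      intro i
      rcases eq_or_ne i j with rfl | hij
      · rw [hF'j]; exact hclU.trans Set.inter_subset_left
      · rw [hF'ne i hij]; exact hFW i
    have pattern : ∀ S : Finset ι, (⋂ i ∈ S, F i) = ∅ → (⋂ i ∈ S, F' i) = ∅ := by
      intro S hS
      by_cases hjS : j ∈ S
      · rcases Set.eq_empty_or_nonempty (⋂ i ∈ S, F' i) with h | ⟨x, hx⟩
        · exact h
        exfalso
        simp only [Set.mem_iInter] at hx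
        have hxj : x ∈ closure U := by have := hx j hjS; rwa [hF'j] at this
        have hxB : x ∈ B := by
          rw [hB]
          refine Set.mem_biUnion (show S.erase j ∈ _ from ?_) ?_
          · show (⋂ i ∈ S.erase j, F i) ∩ F j = ∅
            rw [Set.inter_comm, ← Finset.set_biInter_insert, Finset.insert_erase hjS]
            exact hS
          · exact Set.mem_iInter₂.2 fun i hi => by
              have := hx i (Finset.mem_of_mem_erase hi)
              rwa [hF'ne i (Finset.ne_of_mem_erase hi)] at this
        exact (hclU hxj).2 hxB
      · rw [← hS]
        exact Set.iInter₂_congr fun i hi => hF'ne i (fun h => hjS (h ▸ hi))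
    obtain ⟨G, hG1, hG2, hG3, hG4, hG5⟩ := ih F' hF'c hF'W
    have hGj : G j = closure U := by rw [hG4 j hj, hF'j]
    refine ⟨Function.update G j U, ?_, ?_, ?_, ?_, ?_⟩
    · intro i
      rcases eq_or_ne i j with rfl | hij
      · rw [Function.update_self]; exact hFjU
      · rw [Function.update_of_ne hij]; exact (hF'ne i hij ▸ hG1 i : F i ⊆ G i)
    · intro i
      rcases eq_or_ne i j with rfl | hij
      · rw [Function.update_self]
        exact subset_closure.trans (hclU.trans Set.inter_subset_left)
      · rw [Function.update_of_ne hij]; exact hG2 i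
    · intro i hi
      rcases eq_or_ne i j with rfl | hij
      · rw [Function.update_self]; exact hUo
      · rw [Function.update_of_ne hij]
        exact hG3 i ((Finset.mem_insert.mp hi).resolve_left hij)
    · intro i hi
      have hij : i ≠ j := fun h => hi (h ▸ Finset.mem_insert_self j T)
      rw [Function.update_of_ne hij, hG4 i (fun h => hi (Finset.mem_insert_of_mem h)),
        hF'ne i hij]
    · intro S hS
      have h2 := hG5 S (pattern S hS)
      rw [← Set.subset_empty_iff, ← h2]
      refine Set.iInter₂_mono fun i _ => ?_
      rcases eq_or_ne i j with rfl | hij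
      · rw [Function.update_self, hGj]; exact subset_closure
      · rw [Function.update_of_ne hij]

/-- A compact zero-dimensional space admits a finite disjoint clopen refinement of any
open cover. -/
lemma clopen_partition {Y : Type*} [TopologicalSpace Y] [CompactSpace Y]
    (hY : ZeroDimensional Y) (𝒲 : Set (Set Y)) (h𝒲o : ∀ U ∈ 𝒲, IsOpen U)
    (h𝒲c : ⋃₀ 𝒲 = Set.univ) :
    ∃ (m : ℕ) (K : Fin m → Set Y), (∀ i, IsClopen (K i)) ∧
      (Pairwise fun i j => Disjoint (K i) (K j)) ∧ (⋃ i, K i = Set.univ) ∧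
      ∀ i, ∃ U ∈ 𝒲, K i ⊆ U := by
  obtain ⟨B, hBbasis, hBclopen⟩ := hY
  have hcov : ∀ y : Y, ∃ C, (C ∈ B ∧ y ∈ C) ∧ ∃ U ∈ 𝒲, C ⊆ U := by
    intro y
    have : y ∈ ⋃₀ 𝒲 := h𝒲c ▸ Set.mem_univ y
    obtain ⟨U, hU, hyU⟩ := this
    obtain ⟨C, hCB, hyC, hCU⟩ := hBbasis.exists_subset_of_mem_open hyU (h𝒲o U hU)
    exact ⟨C, ⟨hCB, hyC⟩, U, hU, hCU⟩
  choose C hC hCsub using hcov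
  obtain ⟨s, hs⟩ := isCompact_univ.elim_finite_subcover C
    (fun y => (hBclopen _ (hC y).1).isOpen) (fun y _ => Set.mem_iUnion.2 ⟨y, (hC y).2⟩)
  set m := s.card with hm
  set g : Fin m → Y := fun i => (s.equivFin.symm i : Y) with hg
  set K : Fin m → Set Y := fun i => C (g i) \ ⋃ j ∈ Finset.Iio i, C (g j) with hK
  refine ⟨m, K, ?_, ?_, ?_, ?_⟩
  · intro i
    exact (hBclopen _ (hC (g i)).1).diff
      (isClopen_biUnion_finset fun j _ => hBclopen _ (hC (g j)).1)
  · intro i j hij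
    rcases lt_or_gt_of_ne hij with h | h
    · refine Set.disjoint_left.2 fun x hxi hxj => ?_
      exact hxj.2 (Set.mem_biUnion (Finset.mem_Iio.2 h) hxi.1)
    · refine Set.disjoint_left.2 fun x hxi hxj => ?_
      exact hxi.2 (Set.mem_biUnion (Finset.mem_Iio.2 h) hxj.1)
  · apply Set.eq_univ_of_forall
    intro x
    have hx : x ∈ ⋃ y ∈ s, C y := hs (Set.mem_univ x)
    obtain ⟨y, hys, hxy⟩ := Set.mem_iUnion₂.mp hx
    classical
    have hne : (Finset.univ.filter (fun i => x ∈ C (g i))).Nonempty := by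
      refine ⟨s.equivFin ⟨y, hys⟩, Finset.mem_filter.2 ⟨Finset.mem_univ _, ?_⟩⟩
      have : g (s.equivFin ⟨y, hys⟩) = y := by
        simp [hg]
      rwa [this]
    set i₀ := (Finset.univ.filter (fun i => x ∈ C (g i))).min' hne with hi₀
    refine Set.mem_iUnion.2 ⟨i₀, ?_, ?_⟩
    · exact (Finset.mem_filter.1 ((Finset.univ.filter _).min'_mem hne)).2
    · intro hxmem
      obtain ⟨j, hj, hxj⟩ := Set.mem_iUnion₂.mp hxmem
      have : i₀ ≤ j := Finset.min'_le _ j (Finset.mem_filter.2 ⟨Finset.mem_univ _, hxj⟩)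
      exact absurd (Finset.mem_Iio.1 hj) (not_lt.2 this)
  · intro i
    obtain ⟨U, hU, hCU⟩ := hCsub (g i)
    exact ⟨U, hU, Set.diff_subset.trans hCU⟩

/-- A continuous surjection between compact Hausdorff spaces whose domain is
zero-dimensional and whose fibers have at most `n + 1` points forces the covering
dimension of the codomain to be at most `n`. -/
theorem statement1 {Y X : Type*} [TopologicalSpace Y] [TopologicalSpace X]
    [CompactSpace Y] [T2Space Y] [CompactSpace X] [T2Space X]
    (f : Y → X) (hf : Continuous f) (hsurj : Function.Surjective f)
    (n : ℕ) (hY : ZeroDimensional Y)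
    (hfib : ∀ x : X, (f ⁻¹' {x}).encard ≤ n + 1) :
    CovDimLE X n := by
  intro 𝒰 h𝒰fin h𝒰o h𝒰c
  classical
  -- pull back the cover
  have h𝒲o : ∀ V ∈ (Set.preimage f) '' 𝒰, IsOpen V := by
    rintro V ⟨U, hU, rfl⟩
    exact (h𝒰o U hU).preimage hf
  have h𝒲c : ⋃₀ ((Set.preimage f) '' 𝒰) = Set.univ := by
    apply Set.eq_univ_of_forall
    intro y
    have : f y ∈ ⋃₀ 𝒰 := h𝒰c ▸ Set.mem_univ _
    obtain ⟨U, hU, hyU⟩ := this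
    exact ⟨f ⁻¹' U, ⟨U, hU, rfl⟩, hyU⟩
  obtain ⟨m, K, hKclopen, hKdisj, hKcov, hKsub⟩ :=
    clopen_partition hY ((Set.preimage f) '' 𝒰) h𝒲o h𝒲c
  -- choose a member of 𝒰 containing the image of each piece
  have hchoice : ∀ i, ∃ U ∈ 𝒰, K i ⊆ f ⁻¹' U := by
    intro i
    obtain ⟨V, ⟨U, hU, rfl⟩, hKV⟩ := hKsub i
    exact ⟨U, hU, hKV⟩
  choose W hW𝒰 hKW using hchoice
  -- the closed images
  set F : Fin m → Set X := fun i => f '' K i with hFdef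
  have hFc : ∀ i, IsClosed (F i) :=
    fun i => (((hKclopen i).isClosed.isCompact).image hf).isClosed
  have hFW : ∀ i, F i ⊆ W i := by
    rintro i x ⟨y, hy, rfl⟩
    exact hKW i hy
  -- swell
  obtain ⟨G, hG1, hG2, hG3, hG4, hG5⟩ :=
    swell (X := X) W (fun i => h𝒰o (W i) (hW𝒰 i)) Finset.univ F hFc hFW
  -- key: any n+2 of the F's have empty intersection
  have hkey : ∀ S : Finset (Fin m), S.card = n + 2 → (⋂ i ∈ S, F i) = ∅ := by
    intro S hScard
    rcases Set.eq_empty_or_nonempty (⋂ i ∈ S, F i) with h | ⟨z, hz⟩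
    · exact h
    exfalso
    have hz' : ∀ i ∈ S, ∃ y, y ∈ K i ∧ f y = z := by
      intro i hi
      exact Set.mem_iInter₂.1 hz i hi
    choose y hyK hyf using hz'
    set t : Finset Y := S.attach.image (fun i => y i.1 i.2) with ht
    have hinj : Function.Injective (fun i : {x // x ∈ S} => y i.1 i.2) := by
      intro a b hab
      by_contra hne
      have hne' : a.1 ≠ b.1 := fun h => hne (Subtype.ext h)
      have hab' : y a.1 a.2 = y b.1 b.2 := hab
      have hmem : y a.1 a.2 ∈ K b.1 := by rw [hab']; exact hyK b.1 b.2
      exact Set.disjoint_left.1 (hKdisj hne') (hyK a.1 a.2) hmem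
    have htcard : t.card = n + 2 := by
      rw [ht, Finset.card_image_of_injective _ hinj, Finset.card_attach, hScard]
    have htsub : (t : Set Y) ⊆ f ⁻¹' {z} := by
      intro w hw
      simp only [ht, Finset.coe_image, Set.mem_image] at hw
      obtain ⟨i, _, rfl⟩ := hw
      exact hyf i.1 i.2
    have hle : ((n + 2 : ℕ) : ℕ∞) ≤ (f ⁻¹' {z}).encard := by
      rw [← htcard, ← Set.encard_coe_eq_coe_finsetCard]
      exact Set.encard_le_encard htsub
    have h1 := hle.trans (hfib z)
    have h2 : (n + 2 : ℕ) ≤ (n + 1 : ℕ) := by exact_mod_cast h1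
    omega
  -- assemble the refinement
  refine ⟨Set.range G, Set.finite_range G, ?_, ?_, ?_, ?_⟩
  · rintro V ⟨i, rfl⟩
    exact hG3 i (Finset.mem_univ i)
  · apply Set.eq_univ_of_forall
    intro x
    obtain ⟨y, rfl⟩ := hsurj x
    have : y ∈ ⋃ i, K i := hKcov ▸ Set.mem_univ y
    obtain ⟨i, hi⟩ := Set.mem_iUnion.1 this
    exact ⟨G i, ⟨i, rfl⟩, hG1 i ⟨y, hi, rfl⟩⟩
  · rintro V ⟨i, rfl⟩
    exact ⟨W i, hW𝒰 i, hG2 i⟩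
  · intro x
    have heq : {V ∈ Set.range G | x ∈ V} = G '' {i | x ∈ G i} := by
      ext V
      constructor
      · rintro ⟨⟨i, rfl⟩, hx⟩
        exact ⟨i, hx, rfl⟩
      · rintro ⟨i, hx, rfl⟩
        exact ⟨⟨i, rfl⟩, hx⟩
    have hSx : {i | x ∈ G i} = ↑(Finset.univ.filter (fun i => x ∈ G i)) := by
      ext i; simp
    have hcard : (Finset.univ.filter (fun i => x ∈ G i)).card ≤ n + 1 := by
      by_contra h
      push_neg at h
      obtain ⟨S, hSsub, hScard⟩ :=
        Finset.exists_subset_card_eq (show n + 2 ≤ (Finset.univ.filter (fun i => x ∈ G i)).card from h)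
      have hempty := hG5 S (hkey S hScard)
      have : x ∈ ⋂ i ∈ S, G i := Set.mem_iInter₂.2 fun i hi =>
        (Finset.mem_filter.1 (hSsub hi)).2
      rw [hempty] at this
      exact this
    have hncard : {V ∈ Set.range G | x ∈ V}.ncard ≤ n + 1 := by
      rw [heq, hSx]
      calc (G '' ↑(Finset.univ.filter (fun i => x ∈ G i))).ncard
          ≤ (↑(Finset.univ.filter (fun i => x ∈ G i)) : Set (Fin m)).ncard :=
            Set.ncard_image_le (Set.toFinite _)
        _ = (Finset.univ.filter (fun i => x ∈ G i)).card := Set.ncard_coe_finset _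
        _ ≤ n + 1 := hcard
    exact_mod_cast hncard
end

section
/- Let X be a topological space, let {B_i : i < k} be a finite family of regular open subsets of X, and let T be a regular open subset of X with T ⊆ ⋃_{i<k} B_i. For each i < k put C_i = T ∩ (B_i ∖ ⋃_{j<i} cl B_j), and for x ∈ cl T put F_x = {i < k : x ∈ cl C_i}. Then for every x ∈ cl T and every i ∈ F_x that is not the maximum of F_x, one has x ∈ Fr B_i. -/
/-- Lemma 1 of the paper: if the regular open set `T` is covered by the regular open sets
`B i`, `i < k`, and `C i = T ∩ (B i \ ⋃_{j < i} cl (B j))`, then any `x ∈ cl T` belonging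
to `cl (C i)` for a non-maximal such index `i` lies on the frontier of `B i`. -/
theorem statement2 {X : Type*} [TopologicalSpace X] (k : ℕ)
    (B : Fin k → Set X) (hB : ∀ i, B i = interior (closure (B i)))
    (T : Set X) (hT : T = interior (closure T)) (hTcov : T ⊆ ⋃ i, B i)
    (C : Fin k → Set X)
    (hC : ∀ i, C i = T ∩ (B i \ ⋃ j < i, closure (B j)))
    (x : X) (hx : x ∈ closure T)
    (i : Fin k) (hi : x ∈ closure (C i))
    (j : Fin k) (hj : x ∈ closure (C j)) (hij : i < j) :
    x ∈ frontier (B i) := by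
  have hBopen : IsOpen (B i) := by rw [hB i]; exact isOpen_interior
  have hCi_sub : C i ⊆ B i := by rw [hC i]; intro y hy; exact hy.2.1
  have hclBi : x ∈ closure (B i) := closure_mono hCi_sub hi
  have hxnot : x ∉ B i := by
    intro hxB
    -- B i is an open neighborhood of x, so it meets C j
    have hmeets : (B i ∩ C j).Nonempty := by
      rw [mem_closure_iff] at hj
      exact hj (B i) hBopen hxB
    obtain ⟨y, hyB, hyC⟩ := hmeets
    rw [hC j] at hyC
    exact hyC.2.2 (Set.mem_biUnion hij (subset_closure hyB))
  rw [frontier, hBopen.interior_eq]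
  exact ⟨hclBi, hxnot⟩
end

section
/- Let X be a topological space, let {B_i : i < k} be a finite family of regular open subsets of X, and let T be a regular open subset of X with T ⊆ ⋃_{i<k} B_i. For each i < k put C_i = T ∩ (B_i ∖ ⋃_{j<i} cl B_j). Then for every x ∈ cl T, the set {i < k : x ∈ cl C_i} has cardinality at most one more than the cardinality of {i < k : x ∈ Fr B_i}. -/
/-!
If `x ∈ cl (C i)` but `x ∉ Fr (B i)`, then `x ∈ B i`, since `C i ⊆ B i` and `B i` is open.
For `i < j` the open set `B i` misses `C j`, which avoids `cl (B i)` by construction, so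
`x ∉ cl (C j)`. Hence at most one index lies in
`{i | x ∈ cl (C i)} \ {i | x ∈ Fr (B i)}`.
-/

open Set

theorem Set.ncard_le_ncard_add_one_of_subsingleton_sdiff {α : Type*} {s t : Set α}
    (ht : t.Finite) (hst : (s \ t).Subsingleton) : s.ncard ≤ t.ncard + 1 :=
  calc s.ncard ≤ (s \ t).ncard + t.ncard := ncard_le_ncard_sdiff_add_ncard s t ht
    _ ≤ 1 + t.ncard := by
      gcongr
      exact (ncard_le_one_iff hst.finite).mpr fun ha hb => hst ha hb
    _ = t.ncard + 1 := add_comm _ _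

section

variable {X : Type*} [TopologicalSpace X]

theorem IsOpen.mem_of_mem_closure_of_notMem_frontier {U : Set X} {x : X} (hU : IsOpen U)
    (hcl : x ∈ closure U) (hfr : x ∉ frontier U) : x ∈ U := by
  rw [← hU.interior_eq, ← closure_sdiff_frontier]
  exact ⟨hcl, hfr⟩

variable {ι : Type*} [LinearOrder ι] {B C : ι → Set X}

theorem notMem_closure_of_mem_of_lt (hB : ∀ i, IsOpen (B i))
    (hC : ∀ i, C i ⊆ B i \ ⋃ j < i, closure (B j)) {i j : ι} (hij : i < j) {x : X}
    (hx : x ∈ B i) : x ∉ closure (C j) := by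
  have hdisj : Disjoint (B i) (C j) := by
    refine disjoint_left.mpr fun y hyB hyC => (hC j hyC).2 ?_
    exact mem_biUnion hij (subset_closure hyB)
  exact (hdisj.closure_right (hB i)).notMem_of_mem_left hx

theorem subsingleton_closure_sdiff_frontier (hB : ∀ i, IsOpen (B i))
    (hC : ∀ i, C i ⊆ B i \ ⋃ j < i, closure (B j)) (x : X) :
    ({i | x ∈ closure (C i)} \ {i | x ∈ frontier (B i)}).Subsingleton := by
  have hmem : ∀ i ∈ {i | x ∈ closure (C i)} \ {i | x ∈ frontier (B i)}, x ∈ B i :=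
    fun i ⟨hcl, hfr⟩ => (hB i).mem_of_mem_closure_of_notMem_frontier
      (closure_mono ((hC i).trans sdiff_subset) hcl) hfr
  intro i hi j hj
  by_contra hne
  rcases lt_or_gt_of_ne hne with hij | hji
  · exact notMem_closure_of_mem_of_lt hB hC hij (hmem i hi) hj.1
  · exact notMem_closure_of_mem_of_lt hB hC hji (hmem j hj) hi.1

end

theorem statement3_general {X : Type*} [TopologicalSpace X] (k : ℕ)
    (B : Fin k → Set X) (hB : ∀ i, B i = interior (closure (B i)))
    (T : Set X)
    (C : Fin k → Set X)
    (hC : ∀ i, C i = T ∩ (B i \ ⋃ j < i, closure (B j)))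
    (x : X) :
    {i : Fin k | x ∈ closure (C i)}.ncard ≤ {i : Fin k | x ∈ frontier (B i)}.ncard + 1 := by
  have hBopen : ∀ i, IsOpen (B i) := fun i => hB i ▸ isOpen_interior
  have hCsub : ∀ i, C i ⊆ B i \ ⋃ j < i, closure (B j) := fun i => hC i ▸ inter_subset_right
  exact ncard_le_ncard_add_one_of_subsingleton_sdiff (toFinite _)
    (subsingleton_closure_sdiff_frontier hBopen hCsub x)

/-- If the regular open set `T` is covered by the regular open sets `B i`, `i < k`, and
`C i = T ∩ (B i \ ⋃_{j < i} cl (B j))`, then for `x ∈ cl T` the set of indices `i` with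
`x ∈ cl (C i)` has at most one element more than the set of indices with `x ∈ Fr (B i)`. -/
theorem statement3 {X : Type*} [TopologicalSpace X] (k : ℕ)
    (B : Fin k → Set X) (hB : ∀ i, B i = interior (closure (B i)))
    (T : Set X) (hT : T = interior (closure T)) (hTcov : T ⊆ ⋃ i, B i)
    (C : Fin k → Set X)
    (hC : ∀ i, C i = T ∩ (B i \ ⋃ j < i, closure (B j)))
    (x : X) (hx : x ∈ closure T) :
    {i : Fin k | x ∈ closure (C i)}.ncard ≤ {i : Fin k | x ∈ frontier (B i)}.ncard + 1 :=
  statement3_general k B hB T C hC x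
end

section
/- Let X be a topological space, let 𝓑 be a finite family of regular open subsets of X, and let 𝓣 be a tiling of X such that for every x ∈ X the family {B ∈ 𝓑 : x ∈ Fr B} has cardinality at least |𝓣_x| − 1. Fix T ∈ 𝓣 and a finite family 𝓒 = {C_i : i < k} of regular open subsets of X such that T ⊆ ⋃𝓒 and 𝓑 ∩ 𝓒 = ∅; for i < k put R_i = T ∩ (C_i ∖ ⋃_{j<i} cl C_j). Then 𝓢 = (𝓣 ∖ {T}) ∪ {R_i : i < k} is a tiling of X and for every x ∈ X the family {B ∈ 𝓑 ∪ 𝓒 : x ∈ Fr B} has cardinality at least |𝓢_x| − 1. -/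
/-!
The pieces `R i = T ∩ (C i \ ⋃ j < i, closure (C j))` are regular open, pairwise disjoint, and
their closures cover `closure T`, so trading `T` for them keeps a tiling. At a point `x`, removing
`T` and adding the `m` pieces whose closures contain `x` raises the tile count by at most `m - 1`.
For each such piece except the one of largest index `M`, `x ∈ closure (C i)`, while `x` is a limit
of `R M`, which avoids `closure (C i)`, so `x ∉ C i`: hence `x ∈ frontier (C i)`. These `m - 1`
sets `C i` are distinct and, as `ℬ` and the `C i` are disjoint families, not yet counted.
-/

/-- A tiling of a space is a finite pairwise disjoint family of regular open sets whose
closures cover the space. -/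
def IsTiling {X : Type*} [TopologicalSpace X] (𝒯 : Set (Set X)) : Prop :=
  𝒯.Finite ∧ (∀ T ∈ 𝒯, T = interior (closure T)) ∧
    𝒯.Pairwise Disjoint ∧ (⋃ T ∈ 𝒯, closure T) = Set.univ

open Set Function

section

variable {X ι : Type*} [TopologicalSpace X]

def IsRegularOpen (s : Set X) : Prop := s = interior (closure s)

theorem IsRegularOpen.isOpen {s : Set X} (hs : IsRegularOpen s) : IsOpen s :=
  hs ▸ isOpen_interior

theorem IsRegularOpen.inter {s t : Set X} (hs : IsRegularOpen s) (ht : IsRegularOpen t) :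
    IsRegularOpen (s ∩ t) :=
  (interior_maximal subset_closure (hs.isOpen.inter ht.isOpen)).antisymm <|
    subset_inter ((interior_mono (closure_mono inter_subset_left)).trans hs.ge)
      ((interior_mono (closure_mono inter_subset_right)).trans ht.ge)

theorem isRegularOpen_compl_closure {s : Set X} (hs : IsOpen s) :
    IsRegularOpen (closure s)ᶜ := by
  rw [IsRegularOpen, closure_compl, interior_compl, ← hs.interior_eq, closure_interior_idem]

def closureDisjointed [LT ι] (C : ι → Set X) (i : ι) : Set X :=
  C i \ ⋃ j < i, closure (C j)

section closureDisjointed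

variable [LinearOrder ι] {C : ι → Set X}

theorem closureDisjointed_subset (i : ι) : closureDisjointed C i ⊆ C i :=
  sdiff_subset

theorem closureDisjointed_subset_compl_closure {i j : ι} (hij : i < j) :
    closureDisjointed C j ⊆ (closure (C i))ᶜ :=
  fun _ hx hxi => hx.2 (mem_iUnion₂.mpr ⟨i, hij, hxi⟩)

theorem pairwise_disjoint_closureDisjointed : Pairwise (Disjoint on (closureDisjointed C)) := by
  have key : ∀ {i j : ι}, i < j → Disjoint (closureDisjointed C i) (closureDisjointed C j) :=
    fun hij => disjoint_right.mpr fun _ hxj hxi => closureDisjointed_subset_compl_closure hij hxj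
      (subset_closure (closureDisjointed_subset _ hxi))
  intro i j hij
  rcases hij.lt_or_gt with hij | hij
  exacts [key hij, (key hij).symm]

theorem injOn_setOf_closureDisjointed_nonempty :
    InjOn C {i | (closureDisjointed C i).Nonempty} := by
  have key : ∀ {i j}, i < j → C i = C j → ¬(closureDisjointed C j).Nonempty :=
    fun hij hCij ⟨_, hx⟩ => closureDisjointed_subset_compl_closure hij hx
      (subset_closure (hCij ▸ closureDisjointed_subset _ hx))
  intro i hi j hj hCij
  by_contra hne
  rcases lt_or_gt_of_ne hne with h | h
  exacts [key h hCij hj, key h hCij.symm hi]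

theorem iUnion_lt_closure_eq_closure [Finite ι] (i : ι) :
    ⋃ j < i, closure (C j) = closure (⋃ j < i, C j) :=
  ((toFinite _).closure_biUnion _).symm

theorem IsRegularOpen.closureDisjointed [Finite ι] (hC : ∀ i, IsRegularOpen (C i)) (i : ι) :
    IsRegularOpen (closureDisjointed C i) := by
  rw [_root_.closureDisjointed, sdiff_eq, iUnion_lt_closure_eq_closure]
  exact (hC i).inter (isRegularOpen_compl_closure (isOpen_biUnion fun j _ => (hC j).isOpen))

theorem mem_frontier_of_mem_closure_closureDisjointed {i j : ι} {x : X} (hC : IsOpen (C i))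
    (hij : i < j) (hi : x ∈ closure (closureDisjointed C i))
    (hj : x ∈ closure (closureDisjointed C j)) : x ∈ frontier (C i) := by
  refine ⟨closure_mono (closureDisjointed_subset i) hi, fun hxC => ?_⟩
  have := closure_mono (closureDisjointed_subset_compl_closure hij) hj
  rw [closure_compl] at this
  exact this (interior_mono subset_closure (hC.interior_eq.symm ▸ hxC))

/-- A point of `T` is in the closure of the piece of the first `C i` whose closure contains it,
because `T` minus the earlier closures is an open neighbourhood of it. -/
theorem subset_iUnion_closure_inter_closureDisjointed [Finite ι] {T : Set X} (hT : IsOpen T)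
    (hTC : T ⊆ ⋃ i, C i) :
    T ⊆ ⋃ i, closure (T ∩ closureDisjointed C i) := by
  intro x hx
  obtain ⟨i₀, hi₀⟩ := mem_iUnion.mp (hTC hx)
  obtain ⟨i, hi, hmin⟩ := exists_min_image {i | x ∈ closure (C i)} id (toFinite _)
    ⟨i₀, subset_closure hi₀⟩
  have hearlier : x ∉ ⋃ j < i, closure (C j) := fun h =>
    have ⟨j, hji, hj⟩ := mem_iUnion₂.mp h
    (hmin j hj).not_gt hji
  have hopen : IsOpen (T ∩ (⋃ j < i, closure (C j))ᶜ) := by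
    rw [iUnion_lt_closure_eq_closure]
    exact hT.inter isClosed_closure.isOpen_compl
  refine mem_iUnion.mpr ⟨i, closure_mono ?_ (hopen.inter_closure ⟨⟨hx, hearlier⟩, hi⟩)⟩
  rintro y ⟨⟨hyT, hyV⟩, hyC⟩
  exact ⟨hyT, hyC, hyV⟩

theorem ncard_sep_mem_closure_range_inter_closureDisjointed_sub_one_le [Finite ι] {T : Set X}
    (hC : ∀ i, IsOpen (C i)) (x : X) :
    {S ∈ range (fun i => T ∩ closureDisjointed C i) | x ∈ closure S}.ncard - 1 ≤
      {B ∈ range C | x ∈ frontier B}.ncard := by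
  set R := fun i => T ∩ closureDisjointed C i
  set I := {i | x ∈ closure (R i)}
  have hRI : {S ∈ range R | x ∈ closure S} = R '' I := by
    ext S
    simp only [mem_range, mem_image, mem_ofPred_eq, I]
    constructor
    · rintro ⟨⟨i, rfl⟩, hx⟩
      exact ⟨i, hx, rfl⟩
    · rintro ⟨i, hx, rfl⟩
      exact ⟨⟨i, rfl⟩, hx⟩
  rcases I.eq_empty_or_nonempty with hI | hI
  · rw [hRI, hI, image_empty, ncard_empty]
    exact Nat.zero_le _
  obtain ⟨M, hM, hmax⟩ := exists_max_image I id (toFinite I) hI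
  have hD : ∀ {i}, i ∈ I → x ∈ closure (closureDisjointed C i) :=
    fun hi => closure_mono inter_subset_right hi
  have hfr : ∀ i ∈ I \ {M}, C i ∈ {B ∈ range C | x ∈ frontier B} := fun i hi =>
    ⟨⟨i, rfl⟩, mem_frontier_of_mem_closure_closureDisjointed (hC i)
      ((hmax i hi.1).lt_of_ne hi.2) (hD hi.1) (hD hM)⟩
  have hinj : InjOn C (I \ {M}) := injOn_setOf_closureDisjointed_nonempty.mono fun i hi =>
    (closure_nonempty_iff.mp ⟨x, hD hi.1⟩)
  calc _ ≤ I.ncard - 1 := by rw [hRI]; exact Nat.sub_le_sub_right (ncard_image_le (toFinite I)) 1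
    _ = (I \ {M}).ncard := (ncard_sdiff_singleton_of_mem hM).symm
    _ ≤ _ := ncard_le_ncard_of_injOn C hfr hinj

end closureDisjointed

section replace

variable {𝒯 𝒮 : Set (Set X)} {T : Set X}

theorem IsTiling.diff_singleton_union (h𝒯 : IsTiling 𝒯) (hT : T ∈ 𝒯) (h𝒮fin : 𝒮.Finite)
    (h𝒮reg : ∀ S ∈ 𝒮, IsRegularOpen S) (h𝒮pw : 𝒮.Pairwise Disjoint) (h𝒮T : ∀ S ∈ 𝒮, S ⊆ T)
    (hcover : T ⊆ ⋃ S ∈ 𝒮, closure S) : IsTiling ((𝒯 \ {T}) ∪ 𝒮) := by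
  obtain ⟨h𝒯fin, h𝒯reg, h𝒯pw, h𝒯cover⟩ := h𝒯
  have hdisjT : ∀ {S}, S ∈ 𝒯 \ {T} → Disjoint S T := fun hS => h𝒯pw hS.1 hT hS.2
  refine ⟨h𝒯fin.sdiff.union h𝒮fin, ?_, ?_, ?_⟩
  · rintro S (hS | hS)
    exacts [h𝒯reg S hS.1, h𝒮reg S hS]
  · rintro a (ha | ha) b (hb | hb) hab
    · exact h𝒯pw ha.1 hb.1 hab
    · exact (hdisjT ha).mono_right (h𝒮T b hb)
    · exact ((hdisjT hb).mono_right (h𝒮T a ha)).symm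
    · exact h𝒮pw ha hb hab
  · have hclT : closure T ⊆ ⋃ S ∈ 𝒮, closure S :=
      closure_minimal hcover (h𝒮fin.isClosed_biUnion fun _ _ => isClosed_closure)
    refine eq_univ_of_univ_subset (h𝒯cover ▸ iUnion₂_subset fun S hS => ?_)
    by_cases hST : S = T
    · subst hST
      exact hclT.trans (biUnion_mono subset_union_right fun _ _ => subset_rfl)
    · exact subset_biUnion_of_mem (u := closure) (Or.inl ⟨hS, hST⟩)

theorem ncard_sep_mem_closure_diff_singleton_union_sub_one_le (h𝒯fin : 𝒯.Finite) (hT : T ∈ 𝒯)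
    (h𝒮fin : 𝒮.Finite) (h𝒮T : ∀ S ∈ 𝒮, S ⊆ T) (x : X) :
    {S ∈ (𝒯 \ {T}) ∪ 𝒮 | x ∈ closure S}.ncard - 1 ≤
      ({S ∈ 𝒯 | x ∈ closure S}.ncard - 1) + ({S ∈ 𝒮 | x ∈ closure S}.ncard - 1) := by
  have hold : {S ∈ 𝒯 \ {T} | x ∈ closure S} = {S ∈ 𝒯 | x ∈ closure S} \ {T} := by
    ext S
    simp only [mem_ofPred_eq, mem_sdiff, mem_singleton_iff, and_right_comm]
  have holdfin : {S ∈ 𝒯 | x ∈ closure S}.Finite := h𝒯fin.subset (sep_subset _ _)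
  rw [show {S ∈ (𝒯 \ {T}) ∪ 𝒮 | x ∈ closure S} = _ ∪ _ from sep_union, hold]
  rcases eq_empty_or_nonempty {S ∈ 𝒮 | x ∈ closure S} with hnew | ⟨S, hS, hxS⟩
  · rw [hnew, union_empty]
    have hold_le := ncard_le_ncard (sdiff_subset (t := {T})) holdfin
    omega
  have hxT : x ∈ closure T := closure_mono (h𝒮T S hS) hxS
  have hold_card := ncard_sdiff_singleton_of_mem (s := {S ∈ 𝒯 | x ∈ closure S}) ⟨hT, hxT⟩
  have hunion := ncard_union_le ({S ∈ 𝒯 | x ∈ closure S} \ {T}) {S ∈ 𝒮 | x ∈ closure S}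
  have hnew_pos : 0 < {S ∈ 𝒮 | x ∈ closure S}.ncard :=
    (ncard_pos (h𝒮fin.subset (sep_subset _ _))).mpr ⟨S, hS, hxS⟩
  omega

end replace

end

theorem statement4_general {X : Type*} [TopologicalSpace X]
    (ℬ : Set (Set X)) (hℬfin : ℬ.Finite)
    (𝒯 : Set (Set X)) (h𝒯 : IsTiling 𝒯)
    (hcard : ∀ x : X,
      {T ∈ 𝒯 | x ∈ closure T}.ncard - 1 ≤ {B ∈ ℬ | x ∈ frontier B}.ncard)
    (T : Set X) (hT : T ∈ 𝒯)
    (k : ℕ) (C : Fin k → Set X) (hCreg : ∀ i, C i = interior (closure (C i)))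
    (hTC : T ⊆ ⋃ i, C i)
    (hsep : ℬ ∩ Set.range C = ∅)
    (R : Fin k → Set X)
    (hR : ∀ i, R i = T ∩ (C i \ ⋃ j < i, closure (C j))) :
    IsTiling ((𝒯 \ {T}) ∪ Set.range R) ∧
      ∀ x : X,
        {S ∈ (𝒯 \ {T}) ∪ Set.range R | x ∈ closure S}.ncard - 1 ≤
          {B ∈ ℬ ∪ Set.range C | x ∈ frontier B}.ncard := by
  obtain rfl : R = fun i => T ∩ closureDisjointed C i := funext hR
  have hTreg : IsRegularOpen T := h𝒯.2.1 T hT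
  have hRT : ∀ S ∈ range fun i => T ∩ closureDisjointed C i, S ⊆ T := by
    rintro _ ⟨i, rfl⟩
    exact inter_subset_left
  refine ⟨h𝒯.diff_singleton_union hT (finite_range _) ?_ ?_ hRT ?_, fun x => ?_⟩
  · rintro _ ⟨i, rfl⟩
    exact hTreg.inter (IsRegularOpen.closureDisjointed hCreg i)
  · exact Pairwise.range_pairwise fun i j hij =>
      (pairwise_disjoint_closureDisjointed hij).mono inter_subset_right inter_subset_right
  · simpa only [biUnion_range] using subset_iUnion_closure_inter_closureDisjointed hTreg.isOpen hTC
  have hdisj : Disjoint {B ∈ ℬ | x ∈ frontier B} {B ∈ range C | x ∈ frontier B} :=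
    (disjoint_iff_inter_eq_empty.mpr hsep).mono (sep_subset _ _) (sep_subset _ _)
  calc _ ≤ _ :=
        ncard_sep_mem_closure_diff_singleton_union_sub_one_le h𝒯.1 hT (finite_range _) hRT x
    _ ≤ {B ∈ ℬ | x ∈ frontier B}.ncard + {B ∈ range C | x ∈ frontier B}.ncard :=
      add_le_add (hcard x) (ncard_sep_mem_closure_range_inter_closureDisjointed_sub_one_le
        (fun i => IsRegularOpen.isOpen (hCreg i)) x)
    _ = _ := by
      rw [← ncard_union_eq hdisj (hℬfin.subset (sep_subset _ _))]
      exact congrArg ncard sep_union.symm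

/-- Lemma 2 of the paper: refining one tile of a tiling keeps the counting property with
respect to frontiers of the auxiliary regular open sets. -/
theorem statement4 {X : Type*} [TopologicalSpace X]
    (ℬ : Set (Set X)) (hℬfin : ℬ.Finite) (hℬ : ∀ B ∈ ℬ, B = interior (closure B))
    (𝒯 : Set (Set X)) (h𝒯 : IsTiling 𝒯)
    (hcard : ∀ x : X,
      {T ∈ 𝒯 | x ∈ closure T}.ncard - 1 ≤ {B ∈ ℬ | x ∈ frontier B}.ncard)
    (T : Set X) (hT : T ∈ 𝒯)
    (k : ℕ) (C : Fin k → Set X) (hCreg : ∀ i, C i = interior (closure (C i)))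
    (hTC : T ⊆ ⋃ i, C i)
    (hsep : ℬ ∩ Set.range C = ∅)
    (R : Fin k → Set X)
    (hR : ∀ i, R i = T ∩ (C i \ ⋃ j < i, closure (C j))) :
    IsTiling ((𝒯 \ {T}) ∪ Set.range R) ∧
      ∀ x : X,
        {S ∈ (𝒯 \ {T}) ∪ Set.range R | x ∈ closure S}.ncard - 1 ≤
          {B ∈ ℬ ∪ Set.range C | x ∈ frontier B}.ncard :=
  statement4_general ℬ hℬfin 𝒯 h𝒯 hcard T hT k C hCreg hTC hsep R hR
end

section
/- Let X be a nonempty compact metrizable space with dim X ≤ n. Then there exist a nonempty zero-dimensional compact metrizable space Y and a continuous surjection f : Y → X such that every fiber f⁻¹(x) has at most n+1 points. -/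
universe u

/-!
Using `dim X ≤ n` and Lebesgue numbers, choose finite open covers `𝒱ₖ` of `X` of order `≤ n + 1`
and mesh `≤ 2⁻ᵏ`, together with parent maps `𝒱ₖ₊₁ → 𝒱ₖ` such that the closure of every member lies
in its parent. The threads `(Vₖ)` of this inverse system form a closed subspace `Y` of the product
of the finite discrete sets `𝒱ₖ`, so `Y` is compact, metrizable and zero-dimensional, and `f` sends
a thread to the unique point of `⋂ closure Vₖ`. Every point lies on a thread by König's lemma. Two
threads that agree at some level agree below it, so finitely many distinct threads over `x` are
already told apart at a single level `K`; their `K`-th members are distinct members of `𝒱_K`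
containing `x`, hence there are at most `n + 1` of them.
-/

open Set Metric Filter Topology

theorem Set.encard_le_of_forall_finite_subset {α : Type*} {s : Set α} {m : ℕ∞}
    (h : ∀ t ⊆ s, t.Finite → t.encard ≤ m) : s.encard ≤ m := by
  by_contra! hlt
  lift m to ℕ using hlt.ne_top
  obtain ⟨t, hts, ht⟩ := exists_subset_encard_eq ((ENat.add_one_le_iff (by simp)).2 hlt)
  have := ht ▸ h t hts (finite_of_encard_eq_coe (k := m + 1) (by simpa using ht))
  norm_cast at this
  omega

structure CoverTower (X : Type*) [MetricSpace X] where
  cover : ℕ → Set (Set X)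
  finite_cover (k : ℕ) : (cover k).Finite
  nonempty_of_mem_cover {k : ℕ} {V : Set X} : V ∈ cover k → V.Nonempty
  sUnion_cover (k : ℕ) : ⋃₀ cover k = univ
  dist_le {k : ℕ} {V : Set X} : V ∈ cover k → ∀ a ∈ V, ∀ b ∈ V, dist a b ≤ (1 / 2 : ℝ) ^ k
  parent (k : ℕ) : cover (k + 1) → cover k
  closure_subset_parent (k : ℕ) (V : cover (k + 1)) : closure (V : Set X) ⊆ parent k V

namespace CoverTower

variable {X : Type*} [MetricSpace X] (T : CoverTower X)

abbrev Node (k : ℕ) : Type _ := T.cover k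

instance (k : ℕ) : TopologicalSpace (T.Node k) := ⊥
instance (k : ℕ) : DiscreteTopology (T.Node k) := ⟨rfl⟩
instance (k : ℕ) : Finite (T.Node k) := (T.finite_cover k).to_subtype

def threads : Set ((k : ℕ) → T.Node k) := {σ | ∀ k, T.parent k (σ (k + 1)) = σ k}

abbrev Thread : Type _ := T.threads

variable {T}

theorem isClosed_setOf_parent_apply_eq (k : ℕ) :
    IsClosed {σ : (k : ℕ) → T.Node k | T.parent k (σ (k + 1)) = σ k} :=
  isClosed_eq ((continuous_of_discreteTopology (f := T.parent k)).comp (continuous_apply _))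
    (continuous_apply k)

theorem isClosed_threads : IsClosed T.threads := by
  simpa only [threads, ofPred_forall] using isClosed_iInter isClosed_setOf_parent_apply_eq

instance : CompactSpace T.Thread := isCompact_iff_compactSpace.1 isClosed_threads.isCompact

theorem Thread.apply_eq_of_apply_eq {σ τ : T.Thread} {k K : ℕ} (hk : k ≤ K)
    (h : σ.1 K = τ.1 K) : σ.1 k = τ.1 k := by
  induction K, hk using Nat.le_induction with
  | base => exact h
  | succ K _ ih => exact ih (by rw [← σ.2 K, ← τ.2 K, h])

theorem Thread.exists_injOn_apply {t : Set T.Thread} (ht : t.Finite) :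
    ∃ K, InjOn (fun σ => σ.1 K) t := by
  have : ∀ᶠ K in atTop, ∀ p ∈ t ×ˢ t, p.1 ≠ p.2 → p.1.1 K ≠ p.2.1 K := by
    refine (eventually_all_finite (ht.prod ht)).2 fun ⟨σ, τ⟩ _ => ?_
    by_cases hστ : σ = τ
    · exact .of_forall fun _ h => absurd hστ h
    obtain ⟨j, hj⟩ := Function.ne_iff.1 (Subtype.coe_ne_coe.2 hστ)
    exact eventually_atTop.2 ⟨j, fun K hK _ h => hj (Thread.apply_eq_of_apply_eq hK h)⟩
  obtain ⟨K, hK⟩ := this.exists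
  exact ⟨K, fun σ hσ τ hτ h => by_contra fun hne => hK (σ, τ) ⟨hσ, hτ⟩ hne h⟩

theorem exists_mem_node (k : ℕ) (x : X) : ∃ V : T.Node k, x ∈ (V : Set X) := by
  obtain ⟨V, hV, hxV⟩ := mem_sUnion.1 (T.sUnion_cover k ▸ mem_univ x)
  exact ⟨⟨V, hV⟩, hxV⟩

theorem exists_partial_thread {x : X} (N : ℕ) (V : T.Node N) (hV : x ∈ (V : Set X)) :
    ∃ σ : (k : ℕ) → T.Node k, (∀ k, x ∈ (σ k : Set X)) ∧ σ N = V ∧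
      ∀ k < N, T.parent k (σ (k + 1)) = σ k := by
  classical
  induction N with
  | zero =>
    choose σ hσ using fun k => T.exists_mem_node k x
    refine ⟨Function.update σ 0 V, fun k => ?_, by simp, by simp⟩
    rcases eq_or_ne k 0 with rfl | hk
    · simpa
    · simpa [hk] using hσ k
  | succ N ih =>
    obtain ⟨σ, hσx, hσN, hσ⟩ :=
      ih (T.parent N V) (T.closure_subset_parent N V (subset_closure hV))
    refine ⟨Function.update σ (N + 1) V, fun k => ?_, by simp, fun k hk => ?_⟩
    · rcases eq_or_ne k (N + 1) with rfl | hk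
      · simpa
      · simpa [hk] using hσx k
    · rcases Nat.lt_succ_iff_lt_or_eq.1 hk with hk | rfl
      · rw [Function.update_of_ne (by omega), Function.update_of_ne (by omega), hσ k hk]
      · simp [hσN]

/-- König's lemma, via compactness of `∀ k, T.Node k`. -/
theorem exists_thread_forall_mem (x : X) : ∃ σ : T.Thread, ∀ k, x ∈ (σ.1 k : Set X) := by
  let P (N : ℕ) : Set ((k : ℕ) → T.Node k) :=
    (⋂ k, (fun σ => σ k) ⁻¹' {V | x ∈ (V : Set X)}) ∩
      ⋂ k ∈ Iio N, {σ | T.parent k (σ (k + 1)) = σ k}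
  have hP_anti (N : ℕ) : P (N + 1) ⊆ P N :=
    inter_subset_inter_right _ (biInter_subset_biInter_left (Iio_subset_Iio N.le_succ))
  have hP_closed (N : ℕ) : IsClosed (P N) :=
    (isClosed_iInter fun k => (isClosed_discrete _).preimage (continuous_apply k)).inter
      (isClosed_biInter fun k _ => isClosed_setOf_parent_apply_eq k)
  have hP_nonempty (N : ℕ) : (P N).Nonempty := by
    obtain ⟨V, hV⟩ := T.exists_mem_node N x
    obtain ⟨σ, hσx, -, hσ⟩ := T.exists_partial_thread N V hV
    exact ⟨σ, mem_iInter.2 hσx, mem_iInter₂.2 hσ⟩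
  obtain ⟨σ, hσ⟩ := IsCompact.nonempty_iInter_of_sequence_nonempty_isCompact_isClosed P hP_anti
    hP_nonempty (hP_closed 0).isCompact hP_closed
  have hσP := mem_iInter.1 hσ
  exact ⟨⟨σ, fun k => mem_iInter₂.1 (hσP (k + 1)).2 k k.lt_succ_self⟩,
    fun k => mem_iInter.1 (hσP 0).1 k⟩

variable [CompactSpace X]

theorem Thread.nonempty_iInter_closure (σ : T.Thread) :
    (⋂ k, closure (σ.1 k : Set X)).Nonempty :=
  IsCompact.nonempty_iInter_of_sequence_nonempty_isCompact_isClosed _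
    (fun k => σ.2 k ▸ (T.closure_subset_parent k _).trans subset_closure)
    (fun k => (T.nonempty_of_mem_cover (σ.1 k).2).closure)
    isClosed_closure.isCompact fun _ => isClosed_closure

variable (T) in
noncomputable def point (σ : T.Thread) : X := σ.nonempty_iInter_closure.some

theorem point_mem (σ : T.Thread) (k : ℕ) : T.point σ ∈ (σ.1 k : Set X) := by
  rw [← σ.2 k]
  exact T.closure_subset_parent k _ (mem_iInter.1 σ.nonempty_iInter_closure.some_mem (k + 1))

theorem dist_point_le (σ : T.Thread) {k : ℕ} {y : X} (hy : y ∈ (σ.1 k : Set X)) :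
    dist (T.point σ) y ≤ (1 / 2) ^ k :=
  T.dist_le (σ.1 k).2 _ (point_mem σ k) y hy

theorem point_eq_of_forall_mem {σ : T.Thread} {x : X} (hx : ∀ k, x ∈ (σ.1 k : Set X)) :
    T.point σ = x :=
  dist_le_zero.1 <| ge_of_tendsto'
    (tendsto_pow_atTop_nhds_zero_of_lt_one (by norm_num) (by norm_num))
    fun k => dist_point_le σ (hx k)

theorem continuous_point : Continuous T.point := by
  refine Metric.continuous_iff'.2 fun σ ε hε => ?_
  obtain ⟨K, hK⟩ := exists_pow_lt_of_lt_one hε (by norm_num : (1 / 2 : ℝ) < 1)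
  have hnhds : {τ : T.Thread | τ.1 K = σ.1 K} ∈ 𝓝 σ :=
    ((isOpen_discrete {σ.1 K}).preimage
      ((continuous_apply K).comp continuous_subtype_val)).mem_nhds rfl
  filter_upwards [hnhds] with τ hτ
  exact (dist_point_le τ (hτ ▸ point_mem σ K)).trans_lt hK

theorem surjective_point : Function.Surjective T.point := fun x =>
  let ⟨σ, hσ⟩ := T.exists_thread_forall_mem x
  ⟨σ, point_eq_of_forall_mem hσ⟩

theorem encard_preimage_point_le {m : ℕ∞} (hm : ∀ k x, {V ∈ T.cover k | x ∈ V}.encard ≤ m)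
    (x : X) : (T.point ⁻¹' {x}).encard ≤ m := by
  refine encard_le_of_forall_finite_subset fun t ht htf => ?_
  obtain ⟨K, hK⟩ := Thread.exists_injOn_apply htf
  calc t.encard = ((fun σ : T.Thread => (σ.1 K : Set X)) '' t).encard :=
        (Subtype.val_injective.comp_injOn hK).encard_image.symm
    _ ≤ {V ∈ T.cover K | x ∈ V}.encard := by
        refine encard_le_encard ?_
        rintro _ ⟨σ, hσ, rfl⟩
        exact ⟨(σ.1 K).2, ht hσ ▸ point_mem σ K⟩
    _ ≤ m := hm K x

end CoverTower

section FineCovers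

variable {X : Type*} [MetricSpace X]

structure IsFineCover (n : ℕ) (ε : ℝ) (𝒱 : Set (Set X)) : Prop where
  finite : 𝒱.Finite
  isOpen {V : Set X} : V ∈ 𝒱 → IsOpen V
  nonempty {V : Set X} : V ∈ 𝒱 → V.Nonempty
  sUnion_eq : ⋃₀ 𝒱 = univ
  encard_le (x : X) : {V ∈ 𝒱 | x ∈ V}.encard ≤ n + 1
  dist_le {V : Set X} : V ∈ 𝒱 → ∀ a ∈ V, ∀ b ∈ V, dist a b ≤ ε

variable [CompactSpace X] {n : ℕ}

theorem CovDimLE.exists_isFineCover_refining (hdim : CovDimLE X n) {𝒰 : Set (Set X)}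
    (h𝒰o : ∀ U ∈ 𝒰, IsOpen U) (h𝒰 : ⋃₀ 𝒰 = univ) {ε : ℝ} (hε : 0 < ε) :
    ∃ 𝒱, IsFineCover n ε 𝒱 ∧ ∀ V ∈ 𝒱, ∃ U ∈ 𝒰, closure V ⊆ U := by
  obtain ⟨δ, hδ, hleb⟩ := lebesgue_number_lemma_of_metric_sUnion isCompact_univ h𝒰o h𝒰.ge
  set r := min (δ / 2) (ε / 2)
  obtain ⟨s, -, hsf, hs⟩ :=
    finite_cover_balls_of_compact (isCompact_univ (X := X)) (lt_min (half_pos hδ) (half_pos hε))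
  obtain ⟨𝒱, h𝒱f, h𝒱o, h𝒱, h𝒱ref, h𝒱mult⟩ := hdim ((ball · r) '' s) (hsf.image _)
    (by rintro _ ⟨x, -, rfl⟩; exact isOpen_ball) (by rw [sUnion_image]; exact univ_subset_iff.1 hs)
  have h𝒱ball {V : Set X} (hV : V ∈ 𝒱) : ∃ c, V ⊆ ball c r := by
    obtain ⟨_, ⟨c, -, rfl⟩, hVc⟩ := h𝒱ref V hV
    exact ⟨c, hVc⟩
  refine ⟨{V ∈ 𝒱 | V.Nonempty}, ⟨h𝒱f.sep _, fun hV => h𝒱o _ hV.1, fun hV => hV.2, ?_, fun x => ?_,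
    ?_⟩, ?_⟩
  · refine eq_univ_of_forall fun x => ?_
    obtain ⟨V, hV, hxV⟩ := mem_sUnion.1 (h𝒱 ▸ mem_univ x)
    exact ⟨V, ⟨hV, x, hxV⟩, hxV⟩
  · have hmult : {V ∈ 𝒱 | x ∈ V}.ncard ≤ n + 1 := by exact_mod_cast h𝒱mult x
    calc {V ∈ {V ∈ 𝒱 | V.Nonempty} | x ∈ V}.encard ≤ {V ∈ 𝒱 | x ∈ V}.encard :=
          encard_le_encard fun V hV => ⟨hV.1.1, hV.2⟩
      _ = {V ∈ 𝒱 | x ∈ V}.ncard := (h𝒱f.sep _).cast_ncard_eq.symm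
      _ ≤ n + 1 := by exact_mod_cast hmult
  · rintro V ⟨hV, -⟩ a ha b hb
    obtain ⟨c, hVc⟩ := h𝒱ball hV
    calc dist a b ≤ dist a c + dist b c := dist_triangle_right a b c
      _ ≤ r + r := add_le_add (mem_ball.1 (hVc ha)).le (mem_ball.1 (hVc hb)).le
      _ ≤ ε := by linarith [min_le_right (δ / 2) (ε / 2)]
  · rintro V ⟨hV, -⟩
    obtain ⟨c, hVc⟩ := h𝒱ball hV
    obtain ⟨U, hU, hcU⟩ := hleb c (mem_univ c)
    have hrδ : r < δ := (min_le_left _ _).trans_lt (half_lt_self hδ)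
    exact ⟨U, hU, (closure_mono hVc).trans <|
      closure_ball_subset_closedBall.trans <| (closedBall_subset_ball hrδ).trans hcU⟩

theorem CovDimLE.exists_coverTower (hdim : CovDimLE X n) :
    ∃ T : CoverTower X, ∀ k x, {V ∈ T.cover k | x ∈ V}.encard ≤ n + 1 := by
  have hstep (k : ℕ) (𝒰 : {𝒰 // IsFineCover n ((1 / 2 : ℝ) ^ k) 𝒰}) :
      ∃ 𝒱 : {𝒱 // IsFineCover n ((1 / 2 : ℝ) ^ (k + 1)) 𝒱}, ∀ V ∈ 𝒱.1, ∃ U ∈ 𝒰.1, closure V ⊆ U :=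
    let ⟨𝒱, h𝒱, href⟩ := hdim.exists_isFineCover_refining (fun _ => 𝒰.2.isOpen) 𝒰.2.sUnion_eq
      (by positivity)
    ⟨⟨𝒱, h𝒱⟩, href⟩
  choose next hnext using hstep
  obtain ⟨𝒱₀, h𝒱₀, -⟩ := hdim.exists_isFineCover_refining (𝒰 := {univ}) (by simp) (by simp)
    one_pos
  let covers (k : ℕ) : {𝒱 // IsFineCover n ((1 / 2 : ℝ) ^ k) 𝒱} :=
    Nat.rec ⟨𝒱₀, by simpa using h𝒱₀⟩ next k
  choose parent hparent using fun k (V : (covers (k + 1)).1) => hnext k (covers k) V V.2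
  exact ⟨{ cover k := (covers k).1
           finite_cover k := (covers k).2.finite
           nonempty_of_mem_cover h := (covers _).2.nonempty h
           sUnion_cover k := (covers k).2.sUnion_eq
           dist_le h := (covers _).2.dist_le h
           parent k V := ⟨parent k V, (hparent k V).1⟩
           closure_subset_parent k V := (hparent k V).2 }, fun k => (covers k).2.encard_le⟩

end FineCovers

/-- A nonempty compact metrizable space of covering dimension at most `n` is the continuous
image of a nonempty zero-dimensional compact metrizable space under a map with fibers of
at most `n + 1` points. -/
theorem statement5 {X : Type u} [TopologicalSpace X] [Nonempty X] [CompactSpace X]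
    [TopologicalSpace.MetrizableSpace X] (n : ℕ) (hdim : CovDimLE X n) :
    ∃ (Y : Type u) (_ : TopologicalSpace Y), Nonempty Y ∧ CompactSpace Y ∧
      TopologicalSpace.MetrizableSpace Y ∧ ZeroDimensional Y ∧
      ∃ f : Y → X, Continuous f ∧ Function.Surjective f ∧
        ∀ x : X, (f ⁻¹' {x}).encard ≤ n + 1 := by
  let _ : MetricSpace X := TopologicalSpace.metrizableSpaceMetric X
  obtain ⟨T, hT⟩ := hdim.exists_coverTower
  exact ⟨T.Thread, inferInstance, T.surjective_point.nonempty, inferInstance, inferInstance,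
    ⟨_, isTopologicalBasis_isClopen, fun _ => id⟩, T.point, T.continuous_point, T.surjective_point,
    T.encard_preimage_point_le hT⟩
end

section
/- Let X be a compact subspace of the Tychonoff cube [0,1]^{ω₁} (the product of copies of [0,1] indexed by the countable ordinals, with the product topology), and for each α < ω₁ let X_α = p_α[X] be the image of X under the restriction map p_α : [0,1]^{ω₁} → [0,1]^α sending x to x↾α. Let n be a natural number with dim X ≤ n and not dim X ≤ n−1. Then there is a subset C of ω₁ that is closed and unbounded in ω₁ such that for every α ∈ C, dim X_α ≤ n and not dim X_α ≤ n−1. -/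
/-- The first uncountable ordinal. -/
noncomputable def omega1 : Ordinal.{0} := (Cardinal.aleph 1).ord

/-!
By compactness, a finite open cover of `X` is refined by finitely many basic cylinders, which
involve only finitely many coordinates; grouping them shows that the cover is refined, with the
same order, by a cover pulled back from a countable stage `X_β`, and every larger `β` is a stage
too. For countable `β` there are only countably many finite covers of `X` by basic cylinders with
coordinates below `β`, so the closure points `α` of `β ↦ sup of the stages of these covers` form a
club. For such a limit `α`, a finite open cover of `X_α` pulls back to a cover of `X` refined by
cylinders below some `β < α`, whose stage lies below `α`: this gives `dim X_α ≤ n`. A cover of `X`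
with no refinement of order `≤ n - 1` has a stage `α₀`, and for `α ≥ α₀` a refinement of order
`≤ n - 1` of its stage cover in `X_α` would pull back to `X`: so `dim X_α > n - 1`.
-/

open Set Function Order TopologicalSpace

section Covers

variable {Y Z : Type*}

def Refines (𝒱 𝒰 : Set (Set Y)) : Prop :=
  ∀ V ∈ 𝒱, ∃ U ∈ 𝒰, V ⊆ U

def CoverOrderLE (𝒰 : Set (Set Y)) (k : ℤ) : Prop :=
  ∀ y, ({U ∈ 𝒰 | y ∈ U}.ncard : ℤ) ≤ k + 1

theorem Refines.trans {𝒲 𝒱 𝒰 : Set (Set Y)} (h₁ : Refines 𝒲 𝒱) (h₂ : Refines 𝒱 𝒰) :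
    Refines 𝒲 𝒰 := fun W hW =>
  let ⟨V, hV, hWV⟩ := h₁ W hW
  let ⟨U, hU, hVU⟩ := h₂ V hV
  ⟨U, hU, hWV.trans hVU⟩

theorem Refines.of_preimage {f : Y → Z} (hf : Surjective f) {𝒪 𝒲 : Set (Set Z)}
    (h : Refines ((f ⁻¹' ·) '' 𝒪) ((f ⁻¹' ·) '' 𝒲)) : Refines 𝒪 𝒲 := by
  intro O hO
  obtain ⟨_, ⟨W, hW, rfl⟩, hOW⟩ := h _ ⟨O, hO, rfl⟩
  exact ⟨W, hW, hf.preimage_subset_preimage_iff.1 hOW⟩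

theorem ncard_sep_image_le {α β : Type*} {s : Set α} (hs : s.Finite) (g : α → β)
    {Q : β → Prop} {R : α → Prop} (h : ∀ a ∈ s, Q (g a) → R a) :
    {b ∈ g '' s | Q b}.ncard ≤ {a ∈ s | R a}.ncard :=
  calc {b ∈ g '' s | Q b}.ncard ≤ (g '' {a ∈ s | R a}).ncard :=
        ncard_le_ncard (by rintro _ ⟨⟨a, ha, rfl⟩, hQ⟩; exact ⟨a, ⟨ha, h a ha hQ⟩, rfl⟩)
          ((hs.sep R).image g)
    _ ≤ {a ∈ s | R a}.ncard := ncard_image_le (hs.sep R)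

theorem CoverOrderLE.image {𝒱 : Set (Set Y)} {k : ℤ} (h : CoverOrderLE 𝒱 k) (h𝒱 : 𝒱.Finite)
    {g : Set Y → Set Z} (p : Z → Y) (hg : ∀ V ∈ 𝒱, ∀ z ∈ g V, p z ∈ V) :
    CoverOrderLE (g '' 𝒱) k := fun z =>
  le_trans (by exact_mod_cast ncard_sep_image_le h𝒱 g fun V hV hz => hg V hV z hz) (h (p z))

theorem CoverOrderLE.preimage {𝒪 : Set (Set Z)} {k : ℤ} (h : CoverOrderLE 𝒪 k)
    (h𝒪 : 𝒪.Finite) (f : Y → Z) : CoverOrderLE ((f ⁻¹' ·) '' 𝒪) k :=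
  h.image h𝒪 f fun _ _ _ hy => hy

/-- Group the members of `𝒞` according to a member of `𝒱` containing them. -/
theorem exists_refines_sUnion_subset {𝒱 𝒞 : Set (Set Y)} {k : ℤ} (h𝒱 : 𝒱.Finite)
    (hord : CoverOrderLE 𝒱 k) (hcov : ⋃₀ 𝒞 = univ) (href : Refines 𝒞 𝒱) :
    ∃ 𝒲 : Set (Set Y), 𝒲.Finite ∧ ⋃₀ 𝒲 = univ ∧ CoverOrderLE 𝒲 k ∧ Refines 𝒲 𝒱 ∧
      ∀ W ∈ 𝒲, ∃ 𝒮 ⊆ 𝒞, W = ⋃₀ 𝒮 := by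
  choose! φ hφ hCφ using href
  set W : Set Y → Set Y := fun V => ⋃₀ {C ∈ 𝒞 | φ C = V}
  have hWV : ∀ V, W V ⊆ V := fun V => sUnion_subset fun C ⟨hC, hCV⟩ => hCV ▸ hCφ C hC
  refine ⟨W '' 𝒱, h𝒱.image W, ?_, ?_, ?_, ?_⟩
  · refine eq_univ_of_forall fun y => ?_
    obtain ⟨C, hC, hyC⟩ := mem_sUnion.1 (hcov.symm ▸ mem_univ y : y ∈ ⋃₀ 𝒞)
    exact ⟨W (φ C), mem_image_of_mem W (hφ C hC), C, ⟨hC, rfl⟩, hyC⟩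
  · exact hord.image h𝒱 id fun V _ _ hy => hWV V hy
  · rintro _ ⟨V, hV, rfl⟩
    exact ⟨V, hV, hWV V⟩
  · rintro _ ⟨V, -, rfl⟩
    exact ⟨_, sep_subset _ _, rfl⟩

variable [TopologicalSpace Y] [TopologicalSpace Z]

def IsFiniteOpenCover (𝒰 : Set (Set Y)) : Prop :=
  𝒰.Finite ∧ (∀ U ∈ 𝒰, IsOpen U) ∧ ⋃₀ 𝒰 = univ

theorem covDimLE_iff {n : ℤ} :
    CovDimLE Y n ↔ ∀ 𝒰 : Set (Set Y), IsFiniteOpenCover 𝒰 →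
      ∃ 𝒱, IsFiniteOpenCover 𝒱 ∧ Refines 𝒱 𝒰 ∧ CoverOrderLE 𝒱 n := by
  simp only [CovDimLE, IsFiniteOpenCover, Refines, CoverOrderLE, and_imp, and_assoc]

theorem IsFiniteOpenCover.preimage {𝒪 : Set (Set Z)} (h : IsFiniteOpenCover 𝒪) {f : Y → Z}
    (hf : Continuous f) : IsFiniteOpenCover ((f ⁻¹' ·) '' 𝒪) := by
  obtain ⟨hfin, hopen, hcov⟩ := h
  refine ⟨hfin.image _, ?_, ?_⟩
  · rintro _ ⟨O, hO, rfl⟩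
    exact (hopen O hO).preimage hf
  · rw [sUnion_image, ← preimage_iUnion₂, ← sUnion_eq_biUnion, hcov, preimage_univ]

theorem exists_refines_of_covDimLE {f : Y → Z} (hf : Continuous f) {k : ℤ}
    (hZ : CovDimLE Z k) {𝒪 : Set (Set Z)} (h𝒪 : IsFiniteOpenCover 𝒪) {𝒰 : Set (Set Y)}
    (href : Refines ((f ⁻¹' ·) '' 𝒪) 𝒰) :
    ∃ 𝒱, IsFiniteOpenCover 𝒱 ∧ Refines 𝒱 𝒰 ∧ CoverOrderLE 𝒱 k := by
  obtain ⟨𝒲, h𝒲, h𝒲𝒪, hord⟩ := covDimLE_iff.1 hZ 𝒪 h𝒪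
  refine ⟨_, h𝒲.preimage hf, ?_, hord.preimage h𝒲.1 f⟩
  rintro _ ⟨W, hW, rfl⟩
  obtain ⟨O, hO, hWO⟩ := h𝒲𝒪 W hW
  obtain ⟨U, hU, hOU⟩ := href _ ⟨O, hO, rfl⟩
  exact ⟨U, hU, (preimage_mono hWO).trans hOU⟩

theorem exists_isFiniteOpenCover_preimage_eq {p : Y → Z} (hp : Surjective p)
    {𝒱 : Set (Set Y)} {k : ℤ} (h𝒱 : IsFiniteOpenCover 𝒱) (hord : CoverOrderLE 𝒱 k)
    (hsat : ∀ V ∈ 𝒱, ∃ O, IsOpen O ∧ p ⁻¹' O = V) :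
    ∃ 𝒪 : Set (Set Z), IsFiniteOpenCover 𝒪 ∧ CoverOrderLE 𝒪 k ∧ (p ⁻¹' ·) '' 𝒪 = 𝒱 := by
  choose! O hO hpO using hsat
  refine ⟨O '' 𝒱, ⟨h𝒱.1.image O, ?_, ?_⟩, ?_, ?_⟩
  · rintro _ ⟨V, hV, rfl⟩
    exact hO V hV
  · refine eq_univ_of_forall fun z => ?_
    obtain ⟨y, rfl⟩ := hp z
    obtain ⟨V, hV, hyV⟩ := mem_sUnion.1 (h𝒱.2.2.symm ▸ mem_univ y : y ∈ ⋃₀ 𝒱)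
    exact ⟨O V, mem_image_of_mem O hV, by rwa [← hpO V hV] at hyV⟩
  · refine hord.image h𝒱.1 (surjInv hp) fun V hV z hz => ?_
    rwa [← hpO V hV, mem_preimage, surjInv_eq hp]
  · rw [image_image, image_congr hpO, image_id']

end Covers

section Omega1

open Ordinal Cardinal

theorem omega1_eq_omega_one : omega1 = ω₁ :=
  ord_aleph 1

theorem isSuccLimit_omega1 : IsSuccLimit omega1 :=
  isSuccLimit_ord (aleph0_le_aleph 1)

theorem countable_Iio_of_lt_omega1 {β : Ordinal.{0}} (hβ : β < omega1) : (Iio β).Countable := by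
  rw [← le_aleph0_iff_set_countable, Cardinal.mk_Iio_ordinal, ← lift_aleph0.{1, 0},
    Cardinal.lift_le, ← lt_succ_iff, succ_aleph0, ← lt_ord]
  exact hβ

theorem iSup_lt_omega1 {ι : Type*} [Countable ι] {f : ι → Ordinal.{0}}
    (hf : ∀ i, f i < omega1) : ⨆ i, f i < omega1 := by
  rw [omega1_eq_omega_one] at hf ⊢
  exact iSup_lt_omega_one hf

theorem Order.IsSuccLimit.exists_forall_lt_of_finite {α : Type*} [LinearOrder α] [OrderBot α]
    [SuccOrder α] [NoMaxOrder α] {a : α} (ha : IsSuccLimit a) {s : Set α} (hs : s.Finite)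
    (hsa : ∀ b ∈ s, b < a) : ∃ c < a, ∀ b ∈ s, b < c :=
  ⟨succ (hs.toFinset.sup id),
    ha.succ_lt ((Finset.sup_lt_iff ha.bot_lt).2 fun b hb => hsa b (hs.mem_toFinset.1 hb)),
    fun _ hb => lt_succ_iff.2 (Finset.le_sup (f := id) (hs.mem_toFinset.2 hb))⟩

def closurePointsAbove (f : Ordinal.{0} → Ordinal.{0}) (α₀ : Ordinal.{0}) : Set Ordinal.{0} :=
  {α | α₀ < α ∧ α < omega1 ∧ ∀ β < α, f β < α}

variable {f : Ordinal.{0} → Ordinal.{0}} {α₀ : Ordinal.{0}}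

theorem sSup_mem_closurePointsAbove {S : Set Ordinal.{0}} (hS : S ⊆ closurePointsAbove f α₀)
    (hne : S.Nonempty) (hlt : sSup S < omega1) : sSup S ∈ closurePointsAbove f α₀ := by
  have hbdd : BddAbove S := ⟨omega1, fun α hα => (hS hα).2.1.le⟩
  obtain ⟨α, hα⟩ := hne
  refine ⟨(hS hα).1.trans_le (le_csSup hbdd hα), hlt, fun β hβ => ?_⟩
  obtain ⟨γ, hγ, hβγ⟩ := (lt_csSup_iff hbdd ⟨α, hα⟩).1 hβ
  exact ((hS hγ).2.2 β hβγ).trans_le (le_csSup hbdd hγ)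

/-- The closure point is the first fixed point above `max δ α₀` of
`β ↦ succ (⨆ γ < β, f γ)`. -/
theorem exists_mem_closurePointsAbove_gt (hf : ∀ β < omega1, f β < omega1)
    (hα₀ : α₀ < omega1) {δ : Ordinal.{0}} (hδ : δ < omega1) :
    ∃ α ∈ closurePointsAbove f α₀, δ < α := by
  set F : Ordinal.{0} → Ordinal.{0} := fun β => succ (⨆ γ : Iio β, f γ)
  have hF : ∀ β < omega1, F β < omega1 := fun β hβ =>
    have := (countable_Iio_of_lt_omega1 hβ).to_subtype
    isSuccLimit_omega1.succ_lt (iSup_lt_omega1 fun γ => hf γ (γ.2.trans hβ))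
  set a := succ (max δ α₀)
  have ha : ∀ ε ≤ max δ α₀, ε < nfp F a := fun ε hε =>
    (hε.trans_lt (lt_succ _)).trans_le (le_nfp F a)
  have hlt : nfp F a < omega1 := by
    refine nfp_lt_ord ?_ hF (isSuccLimit_omega1.succ_lt (max_lt hδ hα₀))
    rw [omega1_eq_omega_one, cof_omega_one]
    exact aleph0_lt_aleph_one
  refine ⟨nfp F a, ⟨ha α₀ (le_max_right _ _), hlt, fun β hβ => ?_⟩, ha δ (le_max_left _ _)⟩
  obtain ⟨k, hk⟩ := lt_nfp_iff.1 hβ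
  calc f β ≤ ⨆ γ : Iio (F^[k] a), f γ := Ordinal.le_iSup (fun γ : Iio _ => f γ) ⟨β, hk⟩
    _ < F (F^[k] a) := lt_succ _
    _ = F^[k + 1] a := (iterate_succ_apply' F k a).symm
    _ ≤ nfp F a := iterate_le_nfp F a (k + 1)

theorem isSuccLimit_of_mem_closurePointsAbove (hf : ∀ β, succ β ≤ f β) {α : Ordinal.{0}}
    (hα : α ∈ closurePointsAbove f α₀) : IsSuccLimit α :=
  IsSuccLimit.mk (not_isMin_of_lt hα.1)
    (isSuccPrelimit_of_succ_lt fun β hβ => (hf β).trans_lt (hα.2.2 β hβ))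

end Omega1

abbrev Cube : Type 1 := {o : Ordinal.{0} // o < omega1} → unitInterval

def restrictBelow (α : Ordinal.{0}) (hα : α ≤ omega1) (x : Cube) :
    {o : Ordinal.{0} // o < α} → unitInterval :=
  fun β => x ⟨β.1, β.2.trans_le hα⟩

theorem continuous_restrictBelow (α : Ordinal.{0}) (hα : α ≤ omega1) :
    Continuous (restrictBelow α hα) :=
  continuous_pi fun _ => continuous_apply _

def cyl (t : Set ({o : Ordinal.{0} // o < omega1} × Set unitInterval)) : Set Cube :=
  {x | ∀ q ∈ t, x q.1 ∈ q.2}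

theorem exists_cyl_subset {α : Ordinal.{0}} (hα : α ≤ omega1)
    {G : Set ({o : Ordinal.{0} // o < α} → unitInterval)} (hG : IsOpen G) {x : Cube}
    (hx : restrictBelow α hα x ∈ G) :
    ∃ t, t.Finite ∧ t ⊆ {i | i.1 < α} ×ˢ countableBasis unitInterval ∧ x ∈ cyl t ∧
      cyl t ⊆ restrictBelow α hα ⁻¹' G := by
  obtain ⟨_, ⟨u, F, hu, rfl⟩, hxF, hFG⟩ :=
    (isTopologicalBasis_pi fun _ => isBasis_countableBasis unitInterval).exists_subset_of_mem_open
      hx hG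
  refine ⟨range fun i : F => ((⟨i.1.1, i.1.2.trans_le hα⟩ : {o : Ordinal.{0} // o < omega1}), u i),
    finite_range _, ?_, ?_, fun y hy => hFG fun i hi => hy _ ⟨⟨i, hi⟩, rfl⟩⟩
  · rintro _ ⟨i, rfl⟩
    exact ⟨i.1.2, hu i i.2⟩
  · rintro _ ⟨i, rfl⟩
    exact hxF i i.2

section Subspace

variable (X : Set Cube)

def IsOpenBelow (α : Ordinal.{0}) (hα : α ≤ omega1) (V : Set X) : Prop :=
  ∃ G, IsOpen G ∧ (restrictBelow α hα ∘ Subtype.val) ⁻¹' G = V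

/-- Coding cylinders by finite sets of (coordinate, basic open set) pairs makes
`cylinders X β` countable for countable `β`. -/
def cylinders (β : Ordinal.{0}) : Set (Set X) :=
  (fun t => Subtype.val ⁻¹' cyl t) ''
    {t | t.Finite ∧ t ⊆ {i | i.1 < β} ×ˢ countableBasis unitInterval}

variable {X} {α β γ : Ordinal.{0}}

theorem IsOpenBelow.isOpen {hα : α ≤ omega1} {V : Set X} (h : IsOpenBelow X α hα V) :
    IsOpen V := by
  obtain ⟨G, hG, rfl⟩ := h
  exact hG.preimage ((continuous_restrictBelow α hα).comp continuous_subtype_val)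

theorem IsOpenBelow.mono {hγ : γ ≤ omega1} {V : Set X} (h : IsOpenBelow X γ hγ V)
    (hγα : γ ≤ α) (hα : α ≤ omega1) : IsOpenBelow X α hα V := by
  obtain ⟨G, hG, rfl⟩ := h
  exact ⟨(fun y (δ : {o : Ordinal.{0} // o < γ}) => y ⟨δ.1, δ.2.trans_le hγα⟩) ⁻¹' G,
    hG.preimage (by fun_prop), rfl⟩

theorem isOpenBelow_sUnion {hα : α ≤ omega1} {𝒮 : Set (Set X)}
    (h : ∀ V ∈ 𝒮, IsOpenBelow X α hα V) : IsOpenBelow X α hα (⋃₀ 𝒮) := by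
  choose! G hG hGV using h
  refine ⟨⋃ V ∈ 𝒮, G V, isOpen_biUnion hG, ?_⟩
  rw [preimage_iUnion₂, sUnion_eq_biUnion]
  exact iUnion₂_congr hGV

theorem IsOpen.isOpenBelow_omega1 {V : Set X} (hV : IsOpen V) : IsOpenBelow X omega1 le_rfl V := by
  obtain ⟨G, hG, rfl⟩ := isOpen_induced_iff.1 hV
  exact ⟨G, hG, rfl⟩

theorem isOpenBelow_iff {hα : α ≤ omega1} {V : Set X} :
    IsOpenBelow X α hα V ↔ ∃ O : Set (restrictBelow α hα '' X), IsOpen O ∧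
      imageFactorization (restrictBelow α hα) X ⁻¹' O = V := by
  constructor
  · rintro ⟨G, hG, rfl⟩
    exact ⟨_, hG.preimage continuous_subtype_val, rfl⟩
  · rintro ⟨O, hO, rfl⟩
    obtain ⟨G, hG, rfl⟩ := isOpen_induced_iff.1 hO
    exact ⟨G, hG, rfl⟩

theorem continuous_imageFactorization_restrictBelow (hα : α ≤ omega1) :
    Continuous (imageFactorization (restrictBelow α hα) X) :=
  ((continuous_restrictBelow α hα).comp continuous_subtype_val).subtype_mk _

theorem countable_cylinders (hβ : β < omega1) : (cylinders X β).Countable :=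
  (countable_ofPred_finite_subset (((countable_Iio_of_lt_omega1 hβ).preimage
    Subtype.val_injective).prod (countable_countableBasis _))).image _

theorem isOpenBelow_of_mem_cylinders (hβ : β ≤ omega1) {C : Set X} (hC : C ∈ cylinders X β) :
    IsOpenBelow X β hβ C := by
  obtain ⟨t, ⟨ht, htβ⟩, rfl⟩ := hC
  refine ⟨⋂ q ∈ t, ⋂ h : q.1.1 < β, (fun y => y ⟨q.1.1, h⟩) ⁻¹' q.2,
    ht.isOpen_biInter fun q hq => isOpen_iInter_of_finite fun _ =>
      (isOpen_of_mem_countableBasis (htβ hq).2).preimage (by fun_prop), ?_⟩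
  ext x
  simp only [preimage_iInter, mem_iInter]
  exact ⟨fun h q hq => h q hq (htβ hq).1, fun h q hq _ => h q hq⟩

theorem exists_cylinders_refines (hX : IsCompact X) (hα : α ≤ omega1) (hlim : IsSuccLimit α)
    {𝒰 : Set (Set X)} (hcov : ⋃₀ 𝒰 = univ) (hU : ∀ U ∈ 𝒰, IsOpenBelow X α hα U) :
    ∃ β < α, ∃ 𝒞 ⊆ cylinders X β, IsFiniteOpenCover 𝒞 ∧ Refines 𝒞 𝒰 := by
  have : CompactSpace X := isCompact_iff_compactSpace.1 hX
  choose U hU𝒰 hxU using fun x : X => mem_sUnion.1 (hcov.symm ▸ mem_univ x : x ∈ ⋃₀ 𝒰)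
  choose G hG hGU using fun x => hU (U x) (hU𝒰 x)
  choose t ht htα hxt htG using fun x : X =>
    exists_cyl_subset hα (hG x) (show x ∈ (restrictBelow α hα ∘ Subtype.val) ⁻¹' G x from
      (hGU x).symm ▸ hxU x)
  have hopen : ∀ x, IsOpen (Subtype.val ⁻¹' cyl (t x) : Set X) := fun x =>
    (isOpenBelow_of_mem_cylinders hα ⟨t x, ⟨ht x, htα x⟩, rfl⟩).isOpen
  obtain ⟨s, hs⟩ := isCompact_univ.elim_finite_subcover _ hopen
    fun x _ => mem_iUnion.2 ⟨x, hxt x⟩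
  obtain ⟨β, hβα, hβ⟩ := hlim.exists_forall_lt_of_finite
    (s.finite_toSet.biUnion fun x _ => (ht x).image fun q => q.1.1) (by
      simp only [mem_iUnion₂, mem_image]
      rintro _ ⟨x, -, q, hq, rfl⟩
      exact (htα x hq).1)
  refine ⟨β, hβα, (fun x => Subtype.val ⁻¹' cyl (t x)) '' s, ?_,
    ⟨s.finite_toSet.image _, ?_, ?_⟩, ?_⟩
  · rintro _ ⟨x, hx, rfl⟩
    exact ⟨t x, ⟨ht x, fun q hq => ⟨hβ _ (mem_biUnion hx ⟨q, hq, rfl⟩), (htα x hq).2⟩⟩, rfl⟩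
  · rintro _ ⟨x, -, rfl⟩
    exact hopen x
  · refine eq_univ_of_forall fun y => ?_
    obtain ⟨x, hx, hyx⟩ := mem_iUnion₂.1 (hs (mem_univ y))
    exact ⟨_, ⟨x, hx, rfl⟩, hyx⟩
  · rintro _ ⟨x, -, rfl⟩
    exact ⟨U x, hU𝒰 x, fun y hy => hGU x ▸ htG x hy⟩

variable (X) in
def cylinderCovers (β : Ordinal.{0}) : Set (Set (Set X)) :=
  {𝒞 | 𝒞 ⊆ cylinders X β ∧ IsFiniteOpenCover 𝒞}

theorem countable_cylinderCovers (hβ : β < omega1) : (cylinderCovers X β).Countable :=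
  (countable_ofPred_finite_subset (countable_cylinders hβ)).mono
    fun 𝒞 (h : 𝒞 ∈ cylinderCovers X β) => (⟨h.2.1, h.1⟩ : 𝒞.Finite ∧ 𝒞 ⊆ cylinders X β)

variable (X) in
def RefinedAtStage (k : ℤ) (𝒰 : Set (Set X)) (α : Ordinal.{0}) (hα : α ≤ omega1) : Prop :=
  ∃ 𝒱, IsFiniteOpenCover 𝒱 ∧ CoverOrderLE 𝒱 k ∧ Refines 𝒱 𝒰 ∧ ∀ V ∈ 𝒱, IsOpenBelow X α hα V

variable {k : ℤ} {𝒰 : Set (Set X)}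

theorem RefinedAtStage.mono {hγ : γ ≤ omega1} (h : RefinedAtStage X k 𝒰 γ hγ) (hγα : γ ≤ α)
    (hα : α ≤ omega1) : RefinedAtStage X k 𝒰 α hα :=
  let ⟨𝒱, h𝒱, hord, href, hbelow⟩ := h
  ⟨𝒱, h𝒱, hord, href, fun V hV => (hbelow V hV).mono hγα hα⟩

/-- Refine `𝒰` with order at most `k`, refine that by finitely many cylinders (compactness),
and merge the cylinders lying in a common member: all coordinates used lie below a countable `β`.
-/
theorem exists_refinedAtStage (hX : IsCompact X) (hdim : CovDimLE X k)
    (h𝒰 : IsFiniteOpenCover 𝒰) : ∃ β, ∃ hβ : β < omega1, RefinedAtStage X k 𝒰 β hβ.le := by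
  obtain ⟨𝒱, h𝒱, h𝒱𝒰, hord⟩ := covDimLE_iff.1 hdim 𝒰 h𝒰
  obtain ⟨β, hβ, 𝒞, h𝒞β, h𝒞, h𝒞𝒱⟩ := exists_cylinders_refines hX le_rfl isSuccLimit_omega1
    h𝒱.2.2 fun V hV => (h𝒱.2.1 V hV).isOpenBelow_omega1
  obtain ⟨𝒲, hfin, hcov, hord', h𝒲𝒱, hunion⟩ :=
    exists_refines_sUnion_subset h𝒱.1 hord h𝒞.2.2 h𝒞𝒱
  have hbelow : ∀ W ∈ 𝒲, IsOpenBelow X β hβ.le W := fun W hW => by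
    obtain ⟨𝒮, h𝒮, rfl⟩ := hunion W hW
    exact isOpenBelow_sUnion fun C hC => isOpenBelow_of_mem_cylinders hβ.le (h𝒞β (h𝒮 hC))
  exact ⟨β, hβ, 𝒲, ⟨hfin, fun W hW => (hbelow W hW).isOpen, hcov⟩, hord', h𝒲𝒱.trans h𝒱𝒰,
    hbelow⟩

theorem RefinedAtStage.exists_cover_image {hα : α ≤ omega1} (h : RefinedAtStage X k 𝒰 α hα) :
    ∃ 𝒪 : Set (Set (restrictBelow α hα '' X)), IsFiniteOpenCover 𝒪 ∧ CoverOrderLE 𝒪 k ∧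
      Refines ((imageFactorization (restrictBelow α hα) X ⁻¹' ·) '' 𝒪) 𝒰 := by
  obtain ⟨𝒱, h𝒱, hord, href, hbelow⟩ := h
  obtain ⟨𝒪, h𝒪, hord𝒪, hpre⟩ := exists_isFiniteOpenCover_preimage_eq
    imageFactorization_surjective h𝒱 hord fun V hV => isOpenBelow_iff.1 (hbelow V hV)
  exact ⟨𝒪, h𝒪, hord𝒪, hpre ▸ href⟩

theorem covDimLE_image_restrictBelow (hX : IsCompact X) (hα : α ≤ omega1)
    (hlim : IsSuccLimit α)
    (h : ∀ β < α, ∀ 𝒞 ∈ cylinderCovers X β, RefinedAtStage X k 𝒞 α hα) :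
    CovDimLE (restrictBelow α hα '' X) k := by
  refine covDimLE_iff.2 fun 𝒲 h𝒲 => ?_
  obtain ⟨β, hβα, 𝒞, h𝒞β, h𝒞, h𝒞𝒲⟩ := exists_cylinders_refines hX hα hlim
    (h𝒲.preimage (continuous_imageFactorization_restrictBelow hα)).2.2
    (by rintro _ ⟨W, hW, rfl⟩; exact isOpenBelow_iff.2 ⟨W, h𝒲.2.1 W hW, rfl⟩)
  obtain ⟨𝒪, h𝒪, hord, h𝒪𝒞⟩ := (h β hβα 𝒞 ⟨h𝒞β, h𝒞⟩).exists_cover_image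
  exact ⟨𝒪, h𝒪, (h𝒪𝒞.trans h𝒞𝒲).of_preimage imageFactorization_surjective, hord⟩

theorem not_covDimLE_image_restrictBelow {m : ℤ} {hα : α ≤ omega1}
    (h𝒰 : ¬∃ 𝒱, IsFiniteOpenCover 𝒱 ∧ Refines 𝒱 𝒰 ∧ CoverOrderLE 𝒱 k)
    (hst : RefinedAtStage X m 𝒰 α hα) : ¬CovDimLE (restrictBelow α hα '' X) k := fun hdim =>
  let ⟨_, h𝒪, _, href⟩ := hst.exists_cover_image
  h𝒰 (exists_refines_of_covDimLE (continuous_imageFactorization_restrictBelow hα) hdim h𝒪 href)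

end Subspace

/-- For a compact subspace `X` of the Tychonoff cube `[0,1]^{ω₁}` of dimension exactly `n`,
there is a closed unbounded set `C` of countable ordinals such that the projection `X_α`
of `X` onto the first `α` coordinates has dimension exactly `n` for every `α ∈ C`. -/
theorem statement7 (n : ℕ)
    (X : Set ({o : Ordinal.{0} // o < omega1} → unitInterval))
    (hX : IsCompact X)
    (hdim : CovDimLE ↥X (n : ℤ)) (hdim' : ¬ CovDimLE ↥X ((n : ℤ) - 1)) :
    ∃ C : Set Ordinal.{0}, C ⊆ Set.Iio omega1 ∧
      (∀ α < omega1, ∃ β ∈ C, α < β) ∧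
      (∀ S : Set Ordinal.{0}, S ⊆ C → S.Nonempty → sSup S < omega1 → sSup S ∈ C) ∧
      ∀ α, ∀ hα : α < omega1, α ∈ C →
        CovDimLE
          ↥((fun (x : {o : Ordinal.{0} // o < omega1} → unitInterval)
              (β : {o : Ordinal.{0} // o < α}) => x ⟨β.1, β.2.trans hα⟩) '' X) (n : ℤ) ∧
        ¬ CovDimLE
          ↥((fun (x : {o : Ordinal.{0} // o < omega1} → unitInterval)
              (β : {o : Ordinal.{0} // o < α}) => x ⟨β.1, β.2.trans hα⟩) '' X)
          ((n : ℤ) - 1) := by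
  obtain ⟨𝒰₀, h𝒰₀, hbad⟩ : ∃ 𝒰₀ : Set (Set X), IsFiniteOpenCover 𝒰₀ ∧
      ¬∃ 𝒱, IsFiniteOpenCover 𝒱 ∧ Refines 𝒱 𝒰₀ ∧ CoverOrderLE 𝒱 ((n : ℤ) - 1) := by
    simpa [covDimLE_iff] using hdim'
  obtain ⟨α₀, hα₀, hst₀⟩ := exists_refinedAtStage hX hdim h𝒰₀
  choose! stage hstage_lt hstage using fun 𝒞 (h : IsFiniteOpenCover 𝒞) =>
    exists_refinedAtStage hX hdim h
  set f : Ordinal.{0} → Ordinal.{0} := fun β => max (succ β) (⨆ 𝒞 : cylinderCovers X β, stage 𝒞)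
  have hf : ∀ β < omega1, f β < omega1 := fun β hβ =>
    have := (countable_cylinderCovers (X := X) hβ).to_subtype
    max_lt (isSuccLimit_omega1.succ_lt hβ) (iSup_lt_omega1 fun 𝒞 => hstage_lt 𝒞 𝒞.2.2)
  refine ⟨closurePointsAbove f α₀, fun α hα => hα.2.1,
    fun δ hδ => exists_mem_closurePointsAbove_gt hf hα₀ hδ,
    fun S hS hne hlt => sSup_mem_closurePointsAbove hS hne hlt, fun α hα hαC => ?_⟩
  have hlim := isSuccLimit_of_mem_closurePointsAbove (fun β => le_max_left _ _) hαC
  refine ⟨covDimLE_image_restrictBelow hX hα.le hlim fun β hβα 𝒞 h𝒞 => ?_,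
    not_covDimLE_image_restrictBelow hbad (hst₀.mono hαC.1.le hα.le)⟩
  have := (countable_cylinderCovers (X := X) (hβα.trans hα)).to_subtype
  have hstage_le : stage 𝒞 ≤ f β :=
    (Ordinal.le_iSup (fun 𝒞 : cylinderCovers X β => stage 𝒞) ⟨𝒞, h𝒞⟩).trans (le_max_right _ _)
  exact (hstage 𝒞 h𝒞.2).mono (hstage_le.trans (hαC.2.2 β hβα).le) hα.le
end

section
/- Let E be an extremally disconnected compact Hausdorff space admitting a continuous irreducible surjection onto the Cantor space. Let X be a compact Hausdorff F-space and let f : X → E be a continuous surjection such that every fiber f⁻¹(e) has at most 2 points. Then X has a nonempty clopen subset that, with the subspace topology, is homeomorphic to E. -/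
/-!
Projectivity of `E` gives a continuous section `s` of `f`. Call `s` minimal if every closed set
whose image contains a clopen set `B` already contains `s '' B`.

If `s` is not minimal, projectivity of such a `B` gives a second section `τ` over `B` that leaves
`range s` on a nonempty open set `O`; as fibres have at most two points, `s '' O` is `f⁻¹' O`
minus the compact set `range τ`, hence open. If `s` is minimal and `range s` had empty interior,
a recursion along a countable clopen π-base of `E` produces two disjoint open Fσ sets off
`range s` whose closures both map onto `E`; minimality puts `range s` into both closures,
contradicting the F-space property. Either way `s` maps some member of the π-base onto a clopen
subset of `X`. The π-base consists of preimages of cylinders of `2^ℕ` under the irreducible map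
`E → 2^ℕ`, and each of them is homeomorphic to `E` because the absolute of `2^ℕ` is unique.
-/

/-- An Fσ-set is a countable union of closed sets. -/
def IsFSigma {X : Type*} [TopologicalSpace X] (A : Set X) : Prop :=
  ∃ F : ℕ → Set X, (∀ n, IsClosed (F n)) ∧ A = ⋃ n, F n

/-- An F-space: disjoint open Fσ-sets have disjoint closures. -/
def IsFSpace (X : Type*) [TopologicalSpace X] : Prop :=
  ∀ U V : Set X, IsOpen U → IsOpen V → IsFSigma U → IsFSigma V → Disjoint U V →
    Disjoint (closure U) (closure V)

open Set Function Topology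

universe u v w

namespace IsFSigma

variable {X Y : Type*} [TopologicalSpace X] [TopologicalSpace Y]

theorem iUnion {A : ℕ → Set X} (hA : ∀ n, IsFSigma (A n)) : IsFSigma (⋃ n, A n) := by
  choose F hF hAF using hA
  refine ⟨fun m => F m.unpair.1 m.unpair.2, fun m => hF _ _, ?_⟩
  simp_rw [hAF]
  ext x
  simp only [mem_iUnion]
  exact ⟨fun ⟨n, k, hx⟩ => ⟨Nat.pair n k, by simpa using hx⟩, fun ⟨m, hx⟩ => ⟨_, _, hx⟩⟩

theorem preimage {A : Set Y} (hA : IsFSigma A) {g : X → Y} (hg : Continuous g) :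
    IsFSigma (g ⁻¹' A) := by
  obtain ⟨F, hF, rfl⟩ := hA
  exact ⟨fun n => g ⁻¹' F n, fun n => (hF n).preimage hg, preimage_iUnion⟩

end IsFSigma

theorem isFSigma_Ioi (a : ℝ) : IsFSigma (Ioi a) := by
  refine ⟨fun k => Ici (a + 1 / (k + 1)), fun k => isClosed_Ici, ?_⟩
  ext y
  simp only [mem_Ioi, mem_iUnion, mem_Ici]
  constructor
  · intro hy
    obtain ⟨k, hk⟩ := exists_nat_one_div_lt (sub_pos.mpr hy)
    exact ⟨k, by linarith⟩
  · rintro ⟨k, hk⟩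
    have : (0 : ℝ) < 1 / (k + 1) := by positivity
    linarith

theorem exists_isOpen_isFSigma_mem_closure_subset {X : Type*} [TopologicalSpace X]
    [NormalSpace X] [T1Space X] {Ω : Set X} (hΩ : IsOpen Ω) {x : X} (hx : x ∈ Ω) :
    ∃ G, IsOpen G ∧ IsFSigma G ∧ x ∈ G ∧ closure G ⊆ Ω := by
  obtain ⟨η, hη0, hη1, -⟩ := exists_continuous_zero_one_of_isClosed hΩ.isClosed_compl
    isClosed_singleton (disjoint_singleton_right.mpr (not_not_intro hx))
  refine ⟨η ⁻¹' Ioi (1 / 2), isOpen_Ioi.preimage η.continuous,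
    (isFSigma_Ioi _).preimage η.continuous, by norm_num [hη1 rfl], ?_⟩
  refine (closure_minimal (preimage_mono Ioi_subset_Ici_self)
    (isClosed_Ici.preimage η.continuous)).trans fun y hy => by_contra fun hyΩ => ?_
  have : η y = 0 := hη0 hyΩ
  norm_num [mem_preimage, this] at hy

theorem exists_pairwise_disjoint_of_closure_subset_diff {X : Type*} [TopologicalSpace X]
    {W : Set X} {Q : ℕ → Set X → Prop}
    (step : ∀ n C, IsClosed C → C ⊆ W → ∃ G, closure G ⊆ W \ C ∧ Q n G) :
    ∃ G : ℕ → Set X, Pairwise (Disjoint on G) ∧ ∀ n, Q n (G n) := by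
  choose next hnext using
    fun n (C : {C : Set X // IsClosed C ∧ C ⊆ W}) => step n C.1 C.2.1 C.2.2
  let Sig : ℕ → {C : Set X // IsClosed C ∧ C ⊆ W} := fun n => Nat.rec
    ⟨∅, isClosed_empty, empty_subset _⟩
    (fun n C => ⟨C.1 ∪ closure (next n C), C.2.1.union isClosed_closure,
      union_subset C.2.2 ((hnext n C).1.trans sdiff_subset)⟩) n
  have hmono : Monotone fun n => (Sig n).1 := monotone_nat_of_le_succ fun n => subset_union_left
  refine ⟨fun n => next n (Sig n), (pairwise_disjoint_on _).mpr fun a b hab => ?_,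
    fun n => (hnext n (Sig n)).2⟩
  have ha : next a (Sig a) ⊆ (Sig b).1 :=
    (subset_closure.trans subset_union_right).trans (hmono (Nat.succ_le_of_lt hab))
  have hb : next b (Sig b) ⊆ ((Sig b).1)ᶜ :=
    subset_closure.trans ((hnext b (Sig b)).1.trans fun _ hx => hx.2)
  exact disjoint_of_subset_left ha (disjoint_compl_right.mono_right hb)

theorem ExtremallyDisconnected.exists_lift {A : Type u} {Y : Type v} {Z : Type w}
    [TopologicalSpace A] [TopologicalSpace Y] [TopologicalSpace Z]
    [CompactSpace A] [T2Space A] [ExtremallyDisconnected A]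
    [CompactSpace Y] [T2Space Y] [CompactSpace Z] [T2Space Z]
    {φ : A → Z} {π : Y → Z} (hφ : Continuous φ) (hπ : Continuous π) (hπs : Surjective π) :
    ∃ σ : A → Y, Continuous σ ∧ π ∘ σ = φ := by
  have : ExtremallyDisconnected (ULift.{max v w} A) :=
    extremallyDisconnected_of_homeo Homeomorph.ulift.symm
  obtain ⟨σ, hσ, hπσ⟩ := CompactT2.ExtremallyDisconnected.projective (A := ULift.{max v w} A)
    (Y := ULift.{max u w} Y) (Z := ULift.{max u v} Z)
    (f := ULift.up ∘ φ ∘ ULift.down) (g := ULift.up ∘ π ∘ ULift.down)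
    (by fun_prop) (by fun_prop) (ULift.up_surjective.comp (hπs.comp ULift.down_surjective))
  refine ⟨ULift.down ∘ σ ∘ ULift.up, by fun_prop, funext fun a => ?_⟩
  exact congrArg ULift.down (congrFun hπσ (ULift.up a))

theorem ExtremallyDisconnected.exists_continuous_leftInverse {A : Type u} {Y : Type v}
    [TopologicalSpace A] [TopologicalSpace Y]
    [CompactSpace A] [T2Space A] [ExtremallyDisconnected A] [CompactSpace Y] [T2Space Y]
    {π : Y → A} (hπ : Continuous π) (hπs : Surjective π) :
    ∃ σ : A → Y, Continuous σ ∧ LeftInverse π σ := by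
  obtain ⟨σ, hσ, hπσ⟩ := exists_lift continuous_id hπ hπs
  exact ⟨σ, hσ, congrFun hπσ⟩

theorem IsOpen.extremallyDisconnected {X : Type*} [TopologicalSpace X] [ExtremallyDisconnected X]
    {U : Set X} (hU : IsOpen U) : ExtremallyDisconnected U where
  open_closure V hV := by
    rw [IsEmbedding.subtypeVal.closure_eq_preimage_closure_image]
    exact (ExtremallyDisconnected.open_closure _
      (hU.isOpenMap_subtype_val V hV)).preimage continuous_subtype_val

def IsIrreducibleMap {D A : Type*} [TopologicalSpace D] (ρ : D → A) : Prop :=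
  ∀ S : Set D, IsClosed S → ρ '' S = univ → S = univ

namespace IsIrreducibleMap

variable {D A B : Type*} {ρ : D → A}

theorem homeomorph_comp [TopologicalSpace D] [TopologicalSpace A] [TopologicalSpace B]
    (hρ : IsIrreducibleMap ρ) (h : A ≃ₜ B) : IsIrreducibleMap (h ∘ ρ) := by
  intro S hS hSρ
  refine hρ S hS ?_
  rw [image_comp, ← h.preimage_symm, ← preimage_univ (f := h.symm)] at hSρ
  exact h.symm.surjective.preimage_injective hSρ

theorem of_comp [TopologicalSpace B] {φ : B → D} (hρφ : IsIrreducibleMap (ρ ∘ φ))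
    (hρ : Surjective ρ) : IsIrreducibleMap φ := by
  intro S hS hSφ
  exact hρφ S hS (by rw [image_comp, hSφ, image_univ_of_surjective hρ])

theorem surjective_of_comp [TopologicalSpace D] {φ : B → D} (hρ : IsIrreducibleMap ρ)
    (hρφ : Surjective (ρ ∘ φ)) (hφ : IsClosed (range φ)) : Surjective φ := by
  refine range_eq_univ.mp (hρ _ hφ ?_)
  rw [← range_comp, range_eq_univ.mpr hρφ]

theorem restrictPreimage [TopologicalSpace D] [TopologicalSpace A] (hρ : IsIrreducibleMap ρ)
    (hρc : Continuous ρ) (hρs : Surjective ρ) {C : Set A} (hC : IsClopen C) :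
    IsIrreducibleMap (C.restrictPreimage ρ) := by
  intro S hS hSρ
  have hclosed : IsClosed (Subtype.val '' S ∪ (ρ ⁻¹' C)ᶜ) :=
    ((hC.isClosed.preimage hρc).isClosedMap_subtype_val S hS).union
      (hC.isOpen.preimage hρc).isClosed_compl
  have hcover : ρ '' (Subtype.val '' S ∪ (ρ ⁻¹' C)ᶜ) = univ := by
    refine eq_univ_of_forall fun a => ?_
    by_cases ha : a ∈ C
    · obtain ⟨x, hxS, hx⟩ := hSρ.symm ▸ mem_univ (⟨a, ha⟩ : C)
      exact ⟨x, Or.inl ⟨x, hxS, rfl⟩, congrArg Subtype.val hx⟩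
    · obtain ⟨x, rfl⟩ := hρs a
      exact ⟨x, Or.inr ha, rfl⟩
  refine eq_univ_of_forall fun x => ?_
  rcases (hρ _ hclosed hcover).symm ▸ mem_univ x.1 with ⟨y, hyS, hyx⟩ | hx
  · rwa [← Subtype.ext hyx]
  · exact absurd x.2 hx

end IsIrreducibleMap

theorem IsIrreducibleMap.nonempty_homeomorph_preimage {E Y : Type*} [TopologicalSpace E]
    [CompactSpace E] [T2Space E] [ExtremallyDisconnected E] [TopologicalSpace Y] [CompactSpace Y]
    [T2Space Y] {g : E → Y} (hg : IsIrreducibleMap g) (hgc : Continuous g) (hgs : Surjective g)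
    {C : Set Y} (hC : IsClopen C) (h : C ≃ₜ Y) : Nonempty (g ⁻¹' C ≃ₜ E) := by
  have hB : IsClopen (g ⁻¹' C) := hC.preimage hgc
  have : CompactSpace (g ⁻¹' C) := isCompact_iff_compactSpace.mp hB.isClosed.isCompact
  have := hB.isOpen.extremallyDisconnected
  set ρ := h ∘ C.restrictPreimage g
  have hρ : IsIrreducibleMap ρ := (hg.restrictPreimage hgc hgs hC).homeomorph_comp h
  have hρc : Continuous ρ := h.continuous.comp hgc.restrictPreimage
  have hρs : Surjective ρ := h.surjective.comp (hgs.restrictPreimage C)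
  obtain ⟨φ, hφc, hρφ⟩ := ExtremallyDisconnected.exists_lift hgc hρc hρs
  have hφ : IsIrreducibleMap φ := IsIrreducibleMap.of_comp (by rwa [hρφ]) hρs
  have hφs : Surjective φ := hρ.surjective_of_comp (by rwa [hρφ]) (isCompact_range hφc).isClosed
  exact ⟨(ExtremallyDisconnected.homeoCompactToT2 hφc hφs
    fun S hne hS hSφ => hne (hφ S hS hSφ)).symm⟩

namespace PiNat

theorem isClopen_cylinder {E : ℕ → Type*} [∀ n, TopologicalSpace (E n)]
    [∀ n, DiscreteTopology (E n)] (x : ∀ n, E n) (n : ℕ) : IsClopen (cylinder x n) :=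
  ⟨by rw [cylinder_eq_pi]; exact isClosed_set_pi fun i _ => isClosed_discrete _,
    isOpen_cylinder E x n⟩

def cylinderHomeomorph {α : Type*} [TopologicalSpace α] (x : ℕ → α) (n : ℕ) :
    cylinder x n ≃ₜ (ℕ → α) where
  toFun y i := y.1 (i + n)
  invFun z := ⟨fun i => if i < n then x i else z (i - n), fun i hi => if_pos hi⟩
  left_inv y := Subtype.ext <| funext fun i => by
    by_cases hi : i < n
    · simp [hi, y.2 i hi]
    · simp [hi, Nat.sub_add_cancel (not_lt.mp hi)]
  right_inv z := funext fun i => by simp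
  continuous_toFun := continuous_pi fun i => (continuous_apply _).comp continuous_subtype_val
  continuous_invFun := (continuous_pi fun i => by split_ifs <;> fun_prop).subtype_mk _

theorem countable_cylinders {α : Type*} [Countable α] :
    {s : Set (ℕ → α) | ∃ x n, s = cylinder x n}.Countable :=
  (countable_range fun p : ℕ × List α => {y | res y p.1 = p.2}).mono <| by
    rintro _ ⟨x, n, rfl⟩
    exact ⟨(n, res x n), (cylinder_eq_res x n).symm⟩

end PiNat

structure IsClopenPiBase {E : Type*} [TopologicalSpace E] (B : ℕ → Set E) : Prop where
  isClopen : ∀ n, IsClopen (B n)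
  nonempty : ∀ n, (B n).Nonempty
  exists_subset : ∀ O, IsOpen O → O.Nonempty → ∃ n, B n ⊆ O

open PiNat in
theorem IsIrreducibleMap.exists_isClopenPiBase_homeomorph_of_cantor {E : Type*}
    [TopologicalSpace E] [CompactSpace E] [T2Space E] [ExtremallyDisconnected E]
    {g : E → ℕ → Bool} (hg : IsIrreducibleMap g) (hgc : Continuous g) (hgs : Surjective g) :
    ∃ B : ℕ → Set E, IsClopenPiBase B ∧ ∀ n, Nonempty (B n ≃ₜ E) := by
  obtain ⟨c, hc⟩ := countable_cylinders.exists_eq_range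
    ⟨univ, fun _ => false, 0, (cylinder_zero _).symm⟩
  choose x k hxk using fun n => hc.symm.subset (mem_range_self n)
  refine ⟨fun n => g ⁻¹' cylinder (x n) (k n),
    ⟨fun n => (isClopen_cylinder _ _).preimage hgc,
      fun n => Set.Nonempty.preimage ⟨x n, self_mem_cylinder _ _⟩ hgs, fun O hO hOne => ?_⟩,
    fun n => hg.nonempty_homeomorph_preimage hgc hgs (isClopen_cylinder _ _)
      (cylinderHomeomorph _ _)⟩
  have hne : g '' Oᶜ ≠ univ := fun h =>
    hOne.ne_empty (compl_univ_iff.mp (hg _ hO.isClosed_compl h))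
  obtain ⟨y, hy⟩ := nonempty_compl.mpr hne
  obtain ⟨_, ⟨x', k', rfl⟩, -, hsub⟩ :=
    (isTopologicalBasis_cylinders _).exists_subset_of_mem_open hy
      (hO.isClosed_compl.isCompact.image hgc).isClosed.isOpen_compl
  obtain ⟨n, hn⟩ : cylinder x' k' ∈ range c := hc.subset ⟨x', k', rfl⟩
  refine ⟨n, fun e he => by_contra fun heO => hsub ?_ ⟨e, heO, rfl⟩⟩
  rwa [← hn, hxk n]

theorem Set.eq_of_encard_le_two {α : Type*} {t : Set α} (ht : t.encard ≤ 2) {x y z : α}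
    (hx : x ∈ t) (hy : y ∈ t) (hz : z ∈ t) (hxy : x ≠ y) (hxz : x ≠ z) : y = z := by
  by_contra hyz
  have h3 : ({x, y, z} : Set α).encard = 3 := by
    rw [encard_insert_of_notMem (by simp [hxy, hxz]), encard_pair hyz]
    norm_num
  have := (encard_le_encard (insert_subset hx (pair_subset hy hz))).trans ht
  rw [h3] at this
  norm_num at this

section MinimalSection

variable {E X : Type*} [TopologicalSpace E] [TopologicalSpace X] {f : X → E} {s : E → X}

def IsMinimalSection (f : X → E) (s : E → X) : Prop :=
  ∀ B : Set E, IsClopen B → ∀ A : Set X, IsClosed A → B ⊆ f '' A → s '' B ⊆ A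

theorem exists_isOpen_image_of_interior_range_nonempty (hs : Continuous s)
    (h : (interior (range s)).Nonempty) : ∃ O, IsOpen O ∧ O.Nonempty ∧ IsOpen (s '' O) := by
  obtain ⟨_, hx⟩ := h
  obtain ⟨e, rfl⟩ := interior_subset hx
  exact ⟨s ⁻¹' interior (range s), isOpen_interior.preimage hs, ⟨e, hx⟩,
    by rw [image_preimage_eq_of_subset interior_subset]; exact isOpen_interior⟩

variable [CompactSpace E] [T2Space X]

theorem exists_section_notMem_range_of_not_isMinimalSection [CompactSpace X] [T2Space E]
    [ExtremallyDisconnected E] (hf : Continuous f)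
    (hsf : LeftInverse f s) (h : ¬ IsMinimalSection f s) :
    ∃ B : Set E, IsClopen B ∧
      ∃ τ : B → X, Continuous τ ∧ (∀ b, f (τ b) = b) ∧ ∃ b, τ b ∉ range s := by
  simp only [IsMinimalSection, not_forall] at h
  obtain ⟨B, hB, A, hA, hBA, hsBA⟩ := h
  obtain ⟨_, ⟨e₀, he₀, rfl⟩, hse₀⟩ := not_subset.mp hsBA
  have : CompactSpace (A ∩ f ⁻¹' B : Set X) :=
    isCompact_iff_compactSpace.mp (hA.inter (hB.isClosed.preimage hf)).isCompact
  have : CompactSpace B := isCompact_iff_compactSpace.mp hB.isClosed.isCompact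
  have := hB.isOpen.extremallyDisconnected
  obtain ⟨σ, hσ, hπσ⟩ := ExtremallyDisconnected.exists_continuous_leftInverse
    (π := fun x : (A ∩ f ⁻¹' B : Set X) => (⟨f x, x.2.2⟩ : B)) (by fun_prop) <| by
      rintro ⟨e, he⟩
      obtain ⟨x, hxA, rfl⟩ := hBA he
      exact ⟨⟨x, hxA, he⟩, rfl⟩
  have hfσ : ∀ b, f (σ b) = b := fun b => congrArg Subtype.val (hπσ b)
  refine ⟨B, hB, fun b => σ b, by fun_prop, hfσ, ⟨e₀, he₀⟩, ?_⟩
  rintro ⟨e, he⟩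
  obtain rfl : e = e₀ := by rw [← hsf e, he, hfσ]
  exact hse₀ (he ▸ (σ ⟨e, he₀⟩).2.1)

theorem exists_isOpen_image_of_section_notMem_range
    (hf : Continuous f) (hs : Continuous s) (hsf : LeftInverse f s)
    (hfib : ∀ e, (f ⁻¹' {e}).encard ≤ 2) {B : Set E} (hB : IsClopen B) {τ : B → X}
    (hτ : Continuous τ) (hfτ : ∀ b, f (τ b) = b) (hτs : ∃ b, τ b ∉ range s) :
    ∃ O, IsOpen O ∧ O.Nonempty ∧ IsOpen (s '' O) := by
  have : CompactSpace B := isCompact_iff_compactSpace.mp hB.isClosed.isCompact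
  have hτ_eq : ∀ b e, τ b = s e → (b : E) = e := fun b e h => by rw [← hfτ b, h, hsf]
  set O : Set E := Subtype.val '' (τ ⁻¹' (range s)ᶜ)
  have hO : IsOpen O :=
    hB.isOpen.isOpenMap_subtype_val _ ((isCompact_range hs).isClosed.isOpen_compl.preimage hτ)
  -- over `O` the fibre of `f` is `{s e, τ e}`, with `τ e ≠ s e`
  have hsO : s '' O = f ⁻¹' O ∩ (range τ)ᶜ := by
    ext x
    constructor
    · rintro ⟨_, ⟨b, hb, rfl⟩, rfl⟩
      refine ⟨by rw [mem_preimage, hsf]; exact ⟨b, hb, rfl⟩, ?_⟩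
      rintro ⟨b', hb'⟩
      obtain rfl : b' = b := Subtype.ext (hτ_eq b' b hb')
      exact hb ⟨_, hb'.symm⟩
    · rintro ⟨⟨b, hb, hbx⟩, hx⟩
      refine ⟨b, ⟨b, hb, rfl⟩, Set.eq_of_encard_le_two (hfib b) (x := τ b) (hfτ b) ?_ (hsf b)
        (fun h => hx ⟨b, h⟩) (fun h => hb ⟨b, h.symm⟩) |>.symm⟩
      exact hbx.symm
  obtain ⟨b, hb⟩ := hτs
  refine ⟨O, hO, ⟨b, b, hb, rfl⟩, ?_⟩
  rw [hsO]
  exact (hO.preimage hf).inter (isCompact_range hτ).isClosed.isOpen_compl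
theorem IsMinimalSection.exists_closure_subset [CompactSpace X] [T2Space E]
    (hmin : IsMinimalSection f s) (hf : Continuous f) (hs : Continuous s) (hsf : LeftInverse f s)
    (hW : range s ⊆ closure (range s)ᶜ)
    {B : Set E} (hB : IsClopen B) (hBne : B.Nonempty) {C : Set X} (hC : IsClosed C)
    (hCW : C ⊆ (range s)ᶜ) :
    ∃ G, closure G ⊆ (range s)ᶜ \ C ∧ IsOpen G ∧ IsFSigma G ∧ (f '' G ∩ B).Nonempty := by
  obtain ⟨e, heB, heC⟩ : ∃ e ∈ B, e ∉ f '' C := not_subset.mp fun hBC => by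
    obtain ⟨e, he⟩ := hBne
    exact hCW (hmin B hB C hC hBC ⟨e, he, rfl⟩) ⟨e, rfl⟩
  have hBC : IsOpen (f ⁻¹' (B \ f '' C)) :=
    (hB.isOpen.sdiff (hC.isCompact.image hf).isClosed).preimage hf
  obtain ⟨x, hx⟩ := mem_closure_iff.mp (hW ⟨e, rfl⟩) _ hBC
    (by rw [mem_preimage, hsf]; exact ⟨heB, heC⟩)
  obtain ⟨G, hGo, hGF, hxG, hGΩ⟩ := exists_isOpen_isFSigma_mem_closure_subset
    (hBC.inter (isCompact_range hs).isClosed.isOpen_compl) hx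
  exact ⟨G, fun y hy => ⟨(hGΩ hy).2, fun hyC => (hGΩ hy).1.2 ⟨y, hyC, rfl⟩⟩, hGo, hGF,
    f x, ⟨x, hxG, rfl⟩, hx.1.1⟩

theorem IsMinimalSection.interior_range_nonempty [CompactSpace X] [T2Space E] (hX : IsFSpace X)
    (hmin : IsMinimalSection f s) (hf : Continuous f) (hs : Continuous s) (hsf : LeftInverse f s)
    {B : ℕ → Set E} (hB : IsClopenPiBase B) : (interior (range s)).Nonempty := by
  by_contra hint
  have hW : range s ⊆ closure (range s)ᶜ := by
    rw [closure_compl, not_nonempty_iff_eq_empty.mp hint, compl_empty]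
    exact subset_univ _
  obtain ⟨G, hGd, hG⟩ := exists_pairwise_disjoint_of_closure_subset_diff
    (Q := fun n G => IsOpen G ∧ IsFSigma G ∧ (f '' G ∩ B (n / 2)).Nonempty)
    -- `G (2 * k)` and `G (2 * k + 1)` both meet `f ⁻¹' B k`
    fun n C hC hCW =>
      hmin.exists_closure_subset hf hs hsf hW (hB.isClopen _) (hB.nonempty _) hC hCW
  have hcover : ∀ k : ℕ → ℕ, (∀ n, k n / 2 = n) → range s ⊆ closure (⋃ n, G (k n)) := by
    intro k hk
    rw [← image_univ]
    refine hmin univ isClopen_univ _ isClosed_closure (eq_univ_of_forall fun e => ?_).ge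
    by_contra hne
    obtain ⟨n, hn⟩ := hB.exists_subset _
      (isClosed_closure.isCompact.image hf).isClosed.isOpen_compl ⟨e, hne⟩
    obtain ⟨_, ⟨x, hx, rfl⟩, hxB⟩ := (hG (k n)).2.2
    rw [hk] at hxB
    exact hn hxB ⟨x, subset_closure (mem_iUnion_of_mem n hx), rfl⟩
  have hUV : Disjoint (closure (⋃ n, G (2 * n))) (closure (⋃ n, G (2 * n + 1))) :=
    hX _ _ (isOpen_iUnion fun n => (hG _).1) (isOpen_iUnion fun n => (hG _).1)
      (IsFSigma.iUnion fun n => (hG _).2.1) (IsFSigma.iUnion fun n => (hG _).2.1)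
      (disjoint_iUnion_left.mpr fun m => disjoint_iUnion_right.mpr fun n => hGd (by omega))
  obtain ⟨e, -⟩ := hB.nonempty 0
  exact hUV.ne_of_mem (hcover _ (fun n => by omega) ⟨e, rfl⟩)
    (hcover _ (fun n => by omega) ⟨e, rfl⟩) rfl

theorem IsClopenPiBase.exists_isClopen_homeomorph {B : ℕ → Set E} (hB : IsClopenPiBase B)
    (hBE : ∀ n, Nonempty (B n ≃ₜ E)) (hf : Continuous f) (hs : Continuous s)
    (hsf : LeftInverse f s) {O : Set E} (hO : IsOpen O) (hOne : O.Nonempty)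
    (hsO : IsOpen (s '' O)) : ∃ K : Set X, IsClopen K ∧ K.Nonempty ∧ Nonempty (K ≃ₜ E) := by
  obtain ⟨n, hn⟩ := hB.exists_subset O hO hOne
  obtain ⟨h⟩ := hBE n
  have hsB : s '' B n = s '' O ∩ f ⁻¹' B n := by
    ext x
    constructor
    · rintro ⟨e, he, rfl⟩
      exact ⟨⟨e, hn he, rfl⟩, by rwa [mem_preimage, hsf]⟩
    · rintro ⟨⟨e, -, rfl⟩, he⟩
      exact ⟨e, by rwa [mem_preimage, hsf] at he, rfl⟩
  refine ⟨s '' B n, ⟨((hB.isClopen n).isClosed.isCompact.image hs).isClosed, ?_⟩,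
    (hB.nonempty n).image s, ⟨((hsf.isEmbedding hf hs).homeomorphImage (B n)).symm.trans h⟩⟩
  rw [hsB]
  exact hsO.inter ((hB.isClopen n).isOpen.preimage hf)

end MinimalSection

/-- If `E` is an extremally disconnected compact Hausdorff space admitting a continuous
irreducible surjection onto the Cantor space, and the compact Hausdorff F-space `X` maps
onto `E` by an at most 2-to-1 continuous map, then `X` has a nonempty clopen subset
homeomorphic to `E`. -/
theorem statement13 {E : Type*} [TopologicalSpace E] [CompactSpace E] [T2Space E]
    [ExtremallyDisconnected E]
    (hE : ∃ g : E → (ℕ → Bool), Continuous g ∧ Function.Surjective g ∧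
      ∀ A : Set E, IsClosed A → g '' A = Set.univ → A = Set.univ)
    {X : Type*} [TopologicalSpace X] [CompactSpace X] [T2Space X]
    (hX : IsFSpace X)
    (f : X → E) (hf : Continuous f) (hfs : Function.Surjective f)
    (hfib : ∀ e : E, (f ⁻¹' {e}).encard ≤ 2) :
    ∃ K : Set X, IsClopen K ∧ K.Nonempty ∧ Nonempty (↥K ≃ₜ E) := by
  obtain ⟨g, hg, hgs, hirr⟩ := hE
  obtain ⟨B, hB, hBE⟩ :=
    IsIrreducibleMap.exists_isClopenPiBase_homeomorph_of_cantor hirr hg hgs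
  obtain ⟨s, hs, hsf⟩ := ExtremallyDisconnected.exists_continuous_leftInverse hf hfs
  obtain ⟨O, hO, hOne, hsO⟩ : ∃ O, IsOpen O ∧ O.Nonempty ∧ IsOpen (s '' O) := by
    by_cases hmin : IsMinimalSection f s
    · exact exists_isOpen_image_of_interior_range_nonempty hs
        (hmin.interior_range_nonempty hX hf hs hsf hB)
    · obtain ⟨C, hC, τ, hτ, hfτ, hτs⟩ :=
        exists_section_notMem_range_of_not_isMinimalSection hf hsf hmin
      exact exists_isOpen_image_of_section_notMem_range hf hs hsf hfib hC hτ hfτ hτs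
  exact hB.exists_isClopen_homeomorph hBE hf hs hsf hO hOne hsO
end

section
/- Let E be an extremally disconnected compact Hausdorff space admitting a continuous irreducible surjection onto the Cantor space. Then there is no continuous surjection f : ℕ* → E such that every fiber f⁻¹(e) has at most 2 points. -/
/-!
By Gleason's theorem the extremally disconnected compactum `E` is projective, so `f` has a
continuous section `s`. The irreducible map onto the Cantor space pulls a countable base back to a
countable π-base of `E`. The fibre of `f` over a point `e` is finite, so its points other than
`s e` can be separated from the closed set `range s` by an open `W ⊇ range s`; the sets
`f ⁻¹' Q ∩ W`, for `Q` in the π-base, then form a countable local π-base at `s e` in `ℕ*`.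
No point of `ℕ*` has one: countably many infinite sets `A n ⊆ ℕ`, whose traces lie in the
members of the family, are all split by a single `Y ⊆ ℕ`, and whichever of the clopen sets
`Y*`, `(ℕ ∖ Y)*` contains the point contains no member of the family.
-/

/-- The Čech–Stone remainder `ℕ* = βℕ ∖ ℕ` of the discrete space of natural numbers. -/
def NStar : Set (StoneCech ℕ) := {p | p ∉ Set.range (stoneCechUnit : ℕ → StoneCech ℕ)}

open Set Function Topology TopologicalSpace

universe u v

section StoneCech

variable {α : Type*} [TopologicalSpace α]

theorem closure_image_stoneCechUnit_union_compl (s : Set α) :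
    closure (stoneCechUnit '' s) ∪ closure (stoneCechUnit '' sᶜ) = univ := by
  rw [← closure_union, ← image_union, union_compl_self, image_univ,
    denseRange_stoneCechUnit.closure_range]

theorem infinite_of_mem_closure_image_stoneCechUnit {s : Set α} {x : StoneCech α}
    (hx : x ∉ range stoneCechUnit) (hxs : x ∈ closure (stoneCechUnit '' s)) : s.Infinite := by
  intro hfin
  rw [(hfin.image _).isClosed.closure_eq] at hxs
  exact hx (image_subset_range _ _ hxs)

theorem exists_closure_image_stoneCechUnit_subset {G : Set (StoneCech α)} (hG : IsOpen G)
    {x : StoneCech α} (hx : x ∈ G) :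
    ∃ s : Set α, x ∈ closure (stoneCechUnit '' s) ∧ closure (stoneCechUnit '' s) ⊆ G := by
  obtain ⟨V, hVo, hxV, hVG⟩ :=
    normal_exists_closure_subset isClosed_singleton hG (singleton_subset_iff.2 hx)
  refine ⟨stoneCechUnit ⁻¹' V, ?_, ?_⟩ <;> rw [image_preimage_eq_inter_range]
  · exact denseRange_stoneCechUnit.open_subset_closure_inter hVo (hxV rfl)
  · exact (closure_mono inter_subset_left).trans hVG

variable [DiscreteTopology α]

theorem closure_image_stoneCechUnit_eq_preimage (s : Set α) :
    closure (stoneCechUnit '' s) =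
      stoneCechExtend (continuous_of_discreteTopology (f := s.boolIndicator)) ⁻¹' {true} := by
  set φ := stoneCechExtend (continuous_of_discreteTopology (f := s.boolIndicator))
  have hφ (a : α) : φ (stoneCechUnit a) = true ↔ a ∈ s := by
    simp only [φ, stoneCechExtend_stoneCechUnit]
    exact (mem_iff_boolIndicator s a).symm
  have hC : IsClopen (φ ⁻¹' {true}) := (isClopen_discrete _).preimage (continuous_stoneCechExtend _)
  apply Subset.antisymm
  · exact closure_minimal (image_subset_iff.2 fun a ha => (hφ a).2 ha) hC.isClosed
  · refine (denseRange_stoneCechUnit.open_subset_closure_inter hC.isOpen).trans (closure_mono ?_)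
    rintro _ ⟨hx, a, rfl⟩
    exact mem_image_of_mem _ ((hφ a).1 hx)

theorem isClopen_closure_image_stoneCechUnit (s : Set α) :
    IsClopen (closure (stoneCechUnit '' s)) := by
  rw [closure_image_stoneCechUnit_eq_preimage]
  exact (isClopen_discrete _).preimage (continuous_stoneCechExtend _)

theorem stoneCechUnit_mem_closure_image_iff {s : Set α} {a : α} :
    stoneCechUnit a ∈ closure (stoneCechUnit '' s) ↔ a ∈ s := by
  rw [closure_image_stoneCechUnit_eq_preimage, mem_preimage, stoneCechExtend_stoneCechUnit,
    mem_singleton_iff, ← mem_iff_boolIndicator]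

theorem disjoint_closure_image_stoneCechUnit {s t : Set α} (h : Disjoint s t) :
    Disjoint (closure (stoneCechUnit '' s)) (closure (stoneCechUnit '' t)) := by
  rw [disjoint_iff_inter_eq_empty, ← subset_empty_iff]
  refine ((isClopen_closure_image_stoneCechUnit s).isOpen.inter_closure).trans ?_
  rw [← closure_empty]
  refine closure_mono ?_
  rintro _ ⟨hs, a, ht, rfl⟩
  exact h.notMem_of_mem_right ht (stoneCechUnit_mem_closure_image_iff.1 hs)

theorem isOpen_range_stoneCechUnit : IsOpen (range (stoneCechUnit : α → StoneCech α)) := by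
  rw [← iUnion_singleton_eq_range]
  refine isOpen_iUnion fun a => ?_
  rw [← closure_singleton, ← image_singleton]
  exact (isClopen_closure_image_stoneCechUnit _).isOpen

theorem exists_mem_closure_image_stoneCechUnit_notMem_range {s : Set α} (hs : s.Infinite) :
    ∃ x ∈ closure (stoneCechUnit '' s), x ∉ range stoneCechUnit := by
  by_contra! h
  have himage : closure (stoneCechUnit '' s) = stoneCechUnit '' s := by
    refine (subset_closure).antisymm' fun x hx => ?_
    obtain ⟨a, rfl⟩ := h x hx
    exact mem_image_of_mem _ (stoneCechUnit_mem_closure_image_iff.1 hx)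
  have hcompact : IsCompact (stoneCechUnit '' s) := himage ▸ isClosed_closure.isCompact
  exact hs (isEmbedding_stoneCechUnit.isInducing.isCompact_iff.2 hcompact).finite_of_discrete

end StoneCech

theorem exists_infinite_inter_infinite_diff {A : ℕ → Set ℕ} (hA : ∀ n, (A n).Infinite) :
    ∃ Y : Set ℕ, ∀ n, (A n ∩ Y).Infinite ∧ (A n \ Y).Infinite := by
  -- position `k` of `φ` serves `A (k / 2).unpair.1`, so each `A n` at infinitely many even
  -- and infinitely many odd positions
  obtain ⟨φ, hφ, hφA⟩ := Filter.extraction_forall_of_frequently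
    (P := fun k m => m ∈ A (k / 2).unpair.1) fun k => Nat.frequently_atTop_iff_infinite.2 (hA _)
  have hmem (n j r : ℕ) (hr : r < 2) : φ (2 * Nat.pair n j + r) ∈ A n := by
    simpa [Nat.mul_add_div, Nat.div_eq_of_lt hr] using hφA (2 * Nat.pair n j + r)
  have hinj (n r : ℕ) : Injective fun j => φ (2 * Nat.pair n j + r) := fun j j' h => by
    simpa using hφ.injective h
  refine ⟨φ '' {k | Even k}, fun n => ⟨?_, ?_⟩⟩
  · refine infinite_of_injective_forall_mem (hinj n 0) fun j => ⟨hmem n j 0 two_pos, ?_⟩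
    exact mem_image_of_mem _ (by simp)
  · refine infinite_of_injective_forall_mem (hinj n 1) fun j => ⟨hmem n j 1 one_lt_two, ?_⟩
    rintro ⟨k, hk, hφk⟩
    rw [hφ.injective hφk] at hk
    simp at hk

section PiBase

variable {X : Type*} [TopologicalSpace X]

def IsPiBase (𝒬 : Set (Set X)) : Prop :=
  (∀ P ∈ 𝒬, IsOpen P ∧ P.Nonempty) ∧ ∀ U, IsOpen U → U.Nonempty → ∃ P ∈ 𝒬, P ⊆ U

def IsLocalPiBase (x : X) (𝒬 : Set (Set X)) : Prop :=
  (∀ P ∈ 𝒬, IsOpen P ∧ P.Nonempty) ∧ ∀ U, IsOpen U → x ∈ U → ∃ P ∈ 𝒬, P ⊆ U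

variable {Y : Type*} [TopologicalSpace Y]

theorem TopologicalSpace.IsTopologicalBasis.isPiBase_preimage [CompactSpace X] [T2Space Y]
    {g : X → Y} (hg : Continuous g) (hgsurj : Surjective g)
    (hirr : ∀ A : Set X, IsClosed A → g '' A = univ → A = univ) {B : Set (Set Y)}
    (hB : IsTopologicalBasis B) : IsPiBase (preimage g '' {b ∈ B | b.Nonempty}) := by
  refine ⟨?_, fun U hU hUne => ?_⟩
  · rintro _ ⟨b, ⟨hbB, hbne⟩, rfl⟩
    exact ⟨(hB.isOpen hbB).preimage hg, hbne.preimage hgsurj⟩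
  · have himage : g '' Uᶜ ≠ univ := fun h =>
      hUne.ne_empty (compl_univ_iff.1 (hirr _ hU.isClosed_compl h))
    obtain ⟨y, hy⟩ := nonempty_compl.2 himage
    obtain ⟨b, hbB, hyb, hb⟩ :=
      hB.exists_subset_of_mem_open hy (hg.isClosedMap _ hU.isClosed_compl).isOpen_compl
    refine ⟨g ⁻¹' b, mem_image_of_mem _ ⟨hbB, y, hyb⟩, fun x hx => ?_⟩
    by_contra hxU
    exact hb hx (mem_image_of_mem g hxU)

theorem IsPiBase.exists_isLocalPiBase_preimage_inter [CompactSpace X] [T2Space X]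
    [CompactSpace Y] [T2Space Y] {f : X → Y} (hf : Continuous f) {s : Y → X}
    (hs : Continuous s) (hfs : RightInverse s f)
    {y : Y} (hfin : (f ⁻¹' {y}).Finite) {𝒬 : Set (Set Y)} (h𝒬 : IsPiBase 𝒬) :
    ∃ W : Set X, IsLocalPiBase (s y) ((fun Q => f ⁻¹' Q ∩ W) '' 𝒬) := by
  have hdisj : Disjoint (f ⁻¹' {y} \ {s y}) (range s) := by
    rintro _ hT hsub x hx
    obtain ⟨y', rfl⟩ := hsub hx
    have hy' : y' = y := (hfs y').symm.trans (hT hx).1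
    exact (hT hx).2 (hy' ▸ rfl)
  obtain ⟨V, W, hVo, hWo, hTV, hsW, hVW⟩ := NormalSpace.normal _ _
    (hfin.subset sdiff_subset).isClosed (isCompact_range hs).isClosed hdisj
  refine ⟨W, ?_, fun U hU hyU => ?_⟩
  · rintro _ ⟨Q, hQ, rfl⟩
    obtain ⟨hQo, q, hq⟩ := h𝒬.1 Q hQ
    exact ⟨(hQo.preimage hf).inter hWo, s q, by rwa [mem_preimage, hfs q], hsW ⟨q, rfl⟩⟩
  · have hfibre : f ⁻¹' {y} ⊆ U ∪ V := fun x hx => by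
      by_cases hxs : x = s y
      · exact Or.inl (hxs ▸ hyU)
      · exact Or.inr (hTV ⟨hx, hxs⟩)
    have hy : y ∈ (f '' (U ∪ V)ᶜ)ᶜ := fun ⟨x, hx, hfx⟩ => hx (hfibre hfx)
    obtain ⟨Q, hQ, hQsub⟩ :=
      h𝒬.2 _ (hf.isClosedMap _ (hU.union hVo).isClosed_compl).isOpen_compl ⟨y, hy⟩
    refine ⟨_, mem_image_of_mem _ hQ, fun x ⟨hxQ, hxW⟩ => ?_⟩
    have hxUV : x ∈ U ∪ V := by
      by_contra hx
      exact hQsub hxQ ⟨x, hx, rfl⟩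
    exact hxUV.resolve_right fun hxV => hVW.notMem_of_mem_left hxV hxW

end PiBase

theorem ExtremallyDisconnected.exists_continuous_rightInverse {E : Type u} {X : Type v}
    [TopologicalSpace E] [CompactSpace E] [T2Space E] [ExtremallyDisconnected E]
    [TopologicalSpace X] [CompactSpace X] [T2Space X] {f : X → E} (hf : Continuous f)
    (hfsurj : Surjective f) : ∃ s : E → X, Continuous s ∧ RightInverse s f := by
  have : ExtremallyDisconnected (ULift.{v} E) :=
    extremallyDisconnected_of_homeo Homeomorph.ulift.symm
  obtain ⟨s, hs, hfs⟩ := CompactT2.ExtremallyDisconnected.projective (A := ULift.{v} E)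
    (Y := ULift.{u} X) (f := id) (g := ULift.up ∘ f ∘ ULift.down) continuous_id
    (continuous_uliftUp.comp (hf.comp continuous_uliftDown))
    (ULift.up_surjective.comp (hfsurj.comp ULift.down_surjective))
  exact ⟨fun e => (s (ULift.up e)).down, continuous_uliftDown.comp (hs.comp continuous_uliftUp),
    fun e => congrArg ULift.down (congrFun hfs (ULift.up e))⟩

theorem isClosed_NStar : IsClosed NStar := isOpen_range_stoneCechUnit.isClosed_compl

instance : CompactSpace NStar := isCompact_iff_compactSpace.1 isClosed_NStar.isCompact

theorem NStar.not_isLocalPiBase_of_countable (p : NStar) {𝒬 : Set (Set NStar)}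
    (h𝒬 : 𝒬.Countable) : ¬ IsLocalPiBase p 𝒬 := by
  rintro ⟨h𝒬open, h𝒬base⟩
  obtain ⟨P, rfl⟩ := h𝒬.exists_eq_range <|
    let ⟨P, hP, _⟩ := h𝒬base univ isOpen_univ trivial; ⟨P, hP⟩
  have htrace (n : ℕ) : ∃ A : Set ℕ, A.Infinite ∧
      ∀ q : NStar, q.1 ∈ closure (stoneCechUnit '' A) → q ∈ P n := by
    obtain ⟨hPo, q, hq⟩ := h𝒬open _ (mem_range_self n)
    obtain ⟨G, hGo, hGP⟩ := isOpen_induced_iff.1 hPo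
    rw [← hGP] at hq ⊢
    obtain ⟨A, hqA, hAG⟩ := exists_closure_image_stoneCechUnit_subset hGo hq
    exact ⟨A, infinite_of_mem_closure_image_stoneCechUnit q.2 hqA, fun r hr => hAG hr⟩
  choose A hAinf hAP using htrace
  obtain ⟨Y, hY⟩ := exists_infinite_inter_infinite_diff hAinf
  -- some `P n` lies in the clopen set of `Z`, yet meets the disjoint clopen set of `A n \ Z`
  have hfalse (Z : Set ℕ) (hpZ : p.1 ∈ closure (stoneCechUnit '' Z))
      (hZ : ∀ n, (A n \ Z).Infinite) : False := by
    obtain ⟨_, ⟨n, rfl⟩, hn⟩ := h𝒬base (Subtype.val ⁻¹' closure (stoneCechUnit '' Z))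
      ((isClopen_closure_image_stoneCechUnit Z).isOpen.preimage continuous_subtype_val) hpZ
    obtain ⟨q, hq, hqN⟩ := exists_mem_closure_image_stoneCechUnit_notMem_range (hZ n)
    have hqZ : q ∈ closure (stoneCechUnit '' Z) :=
      hn (hAP n ⟨q, hqN⟩ (closure_mono (image_mono sdiff_subset) hq))
    exact (disjoint_closure_image_stoneCechUnit disjoint_sdiff_left).notMem_of_mem_left hq hqZ
  rcases (closure_image_stoneCechUnit_union_compl Y).symm ▸ mem_univ p.1 with hp | hp
  · exact hfalse Y hp fun n => (hY n).2
  · exact hfalse Yᶜ hp fun n => by simpa [sdiff_compl] using (hY n).1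

/-- If `E` is an extremally disconnected compact Hausdorff space admitting a continuous
irreducible surjection onto the Cantor space, then there is no continuous surjection from
`ℕ*` onto `E` all of whose fibers have at most 2 points. -/
theorem statement14 {E : Type*} [TopologicalSpace E] [CompactSpace E] [T2Space E]
    [ExtremallyDisconnected E]
    (hE : ∃ g : E → (ℕ → Bool), Continuous g ∧ Function.Surjective g ∧
      ∀ A : Set E, IsClosed A → g '' A = Set.univ → A = Set.univ) :
    ¬ ∃ f : ↥NStar → E, Continuous f ∧ Function.Surjective f ∧
        ∀ e : E, (f ⁻¹' {e}).encard ≤ 2 := by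
  rintro ⟨f, hf, hfsurj, hfibre⟩
  obtain ⟨g, hg, hgsurj, hirr⟩ := hE
  obtain ⟨B, hBc, -, hB⟩ := exists_countable_basis (ℕ → Bool)
  obtain ⟨s, hs, hfs⟩ := ExtremallyDisconnected.exists_continuous_rightInverse hf hfsurj
  obtain ⟨e, -⟩ := hgsurj default
  obtain ⟨W, hW⟩ := (hB.isPiBase_preimage hg hgsurj hirr).exists_isLocalPiBase_preimage_inter
    hf hs hfs (finite_of_encard_le_coe (hfibre e))
  exact NStar.not_isLocalPiBase_of_countable _ (((hBc.mono (sep_subset _ _)).image _).image _) hW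
end
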